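/- arXiv:2502.09364 — 3 statements merged into one kernel-verified Lean document; each statement's English description precedes it below -/
import Mathlib

section
/- Let (X, d_X) be a complete and separable metric space, q ≥ 1, and set Y = [0,1]×X with the metric d_{1/q,q}((t,x),(t',x')) = (|t−t'| + d_X(x,x')^q)^{1/q}. Let μ = Σ_{j=1}^m α_j δ_{(t_j,x_j)} and ν = Σ_{k=1}^n β_k δ_{(t'_k,x'_k)} be finitely supported probability measures on Y (with Σ_j α_j = Σ_k β_k = 1, α_j, β_k > 0), and define μ̃ = Σ_{j=1}^m α_j (t_j δ_{(0,x_j)} + (1−t_j) δ_{(1,x_j)}) and ν̃ = Σ_{k=1}^n β_k (t'_k δ_{(0,x'_k)} + (1−t'_k) δ_{(1,x'_k)}). Then d_{𝒲_q}(μ̃, ν̃) ≤ d_{𝒲_q}(μ, ν); in fact, for every coupling π of μ and ν there is a coupling of μ̃ and ν̃ with the same transport cost ∬ d_{1/q,q}^q dπ. -/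
open MeasureTheory
open scoped ENNReal

noncomputable section

/-- `π` is a coupling of `μ` and `ν`: its marginals are `μ` and `ν`. -/
def IsCoupling {Z : Type*} [MeasurableSpace Z] (π : Measure (Z × Z)) (μ ν : Measure Z) : Prop :=
  π.map Prod.fst = μ ∧ π.map Prod.snd = ν

/-- The transport cost `∬ d(z,z')^p dπ(z,z')` of a plan `π`. -/
def wCost {Z : Type*} [MeasurableSpace Z] (d : Z → Z → ℝ) (p : ℝ) (π : Measure (Z × Z)) : ℝ≥0∞ :=
  ∫⁻ zz, ENNReal.ofReal (d zz.1 zz.2 ^ p) ∂π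

/-- The `p`-Wasserstein distance with respect to the distance function `d`. -/
def wDist {Z : Type*} [MeasurableSpace Z] (d : Z → Z → ℝ) (p : ℝ) (μ ν : Measure Z) : ℝ :=
  ((⨅ π ∈ {π : Measure (Z × Z) | IsProbabilityMeasure π ∧ IsCoupling π μ ν},
      wCost d p π) ^ (1 / p)).toReal

/-- Membership in the `p`-Wasserstein space over `(Z, d)`: Borel probability measures
with finite `p`-th moment. -/
def memW {Z : Type*} [MeasurableSpace Z] (d : Z → Z → ℝ) (p : ℝ) (μ : Measure Z) : Prop :=
  IsProbabilityMeasure μ ∧ ∃ z0 : Z, ∫⁻ z, ENNReal.ofReal (d z z0 ^ p) ∂μ ≠ ⊤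

/-- The distance `d_{α,q}((t,x),(t',x')) = (|t-t'|^{αq} + d_X(x,x')^q)^{1/q}` on `[0,1] × X`. -/
def dAlphaQ {X : Type*} (dX : X → X → ℝ) (α q : ℝ) (y y' : Set.Icc (0:ℝ) 1 × X) : ℝ :=
  (|(y.1 : ℝ) - (y'.1 : ℝ)| ^ (α * q) + dX y.2 y'.2 ^ q) ^ (1 / q)

/-- The metric segment `[y,y'] = {w | d(y,w) + d(w,y') = d(y,y')}`. -/
def mSeg {Y : Type*} (d : Y → Y → ℝ) (y y' : Y) : Set Y :=
  {w | d y w + d w y' = d y y'}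

/-- The metric `λ`-ratio set `M_λ(μ,ν)` inside the 1-Wasserstein space. -/
def ratioSet {Y : Type*} [MeasurableSpace Y] (d : Y → Y → ℝ) (l : ℝ) (μ ν : Measure Y) :
    Set (Measure Y) :=
  {ξ | memW d 1 ξ ∧ wDist d 1 μ ξ = l * wDist d 1 μ ν ∧ wDist d 1 ξ ν = (1 - l) * wDist d 1 μ ν}

namespace FlipAux

def fe0 : Set.Icc (0:ℝ) 1 := ⟨0, Set.left_mem_Icc.mpr zero_le_one⟩
def fe1 : Set.Icc (0:ℝ) 1 := ⟨1, Set.right_mem_Icc.mpr zero_le_one⟩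

variable {X : Type*} [MeasurableSpace X]

/-- one-point flip measure -/
def flipM (y : Set.Icc (0:ℝ) 1 × X) : Measure (Set.Icc (0:ℝ) 1 × X) :=
  ENNReal.ofReal (y.1 : ℝ) • Measure.dirac (fe0, y.2)
    + ENNReal.ofReal (1 - (y.1 : ℝ)) • Measure.dirac (fe1, y.2)

/-- per-pair coupling of the flips -/
def kap (y y' : Set.Icc (0:ℝ) 1 × X) :
    Measure ((Set.Icc (0:ℝ) 1 × X) × (Set.Icc (0:ℝ) 1 × X)) :=
  ENNReal.ofReal (min (y.1:ℝ) (y'.1:ℝ)) • Measure.dirac ((fe0, y.2), (fe0, y'.2))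
    + ENNReal.ofReal (min (1 - (y.1:ℝ)) (1 - (y'.1:ℝ))) • Measure.dirac ((fe1, y.2), (fe1, y'.2))
    + ENNReal.ofReal ((y'.1:ℝ) - (y.1:ℝ)) • Measure.dirac ((fe1, y.2), (fe0, y'.2))
    + ENNReal.ofReal ((y.1:ℝ) - (y'.1:ℝ)) • Measure.dirac ((fe0, y.2), (fe1, y'.2))

lemma hmin (t t' : ℝ) (h : 0 ≤ t') :
    ENNReal.ofReal (min t t') + ENNReal.ofReal (t - t') = ENNReal.ofReal t := by
  rcases le_total t t' with h1 | h1
  · rw [min_eq_left h1, ENNReal.ofReal_eq_zero.mpr (by linarith : t - t' ≤ 0), add_zero]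
  · rw [min_eq_right h1, ← ENNReal.ofReal_add h (by linarith : (0:ℝ) ≤ t - t')]
    congr 1; ring

lemma lintegral_sum_smul_dirac {α : Type*} [MeasurableSpace α] {ι : Type*} (s : Finset ι)
    (c : ι → ℝ≥0∞) (z : ι → α) (f : α → ℝ≥0∞) (hf : Measurable f) :
    ∫⁻ a, f a ∂(∑ i ∈ s, c i • Measure.dirac (z i)) = ∑ i ∈ s, c i * f (z i) := by
  rw [lintegral_finset_sum_measure]
  exact Finset.sum_congr rfl fun i _ => by
    rw [lintegral_smul_measure, lintegral_dirac' _ hf, smul_eq_mul]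

lemma measurable_flipM_apply {s : Set (Set.Icc (0:ℝ) 1 × X)} (hs : MeasurableSet s) :
    Measurable fun y : Set.Icc (0:ℝ) 1 × X => flipM y s := by
  simp only [flipM, Measure.add_apply, Measure.smul_apply, smul_eq_mul,
    Measure.dirac_apply' _ hs]
  have h1 : Measurable fun y : Set.Icc (0:ℝ) 1 × X => (y.1 : ℝ) :=
    measurable_subtype_coe.comp measurable_fst
  exact ((h1.ennreal_ofReal).mul
      ((measurable_one.indicator hs).comp (measurable_const.prodMk measurable_snd))).add
    (((measurable_const.sub h1).ennreal_ofReal).mul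
      ((measurable_one.indicator hs).comp (measurable_const.prodMk measurable_snd)))

lemma measurable_flipM : Measurable (flipM : Set.Icc (0:ℝ) 1 × X → Measure _) :=
  Measure.measurable_of_measurable_coe _ fun _ hs => measurable_flipM_apply hs

lemma measurable_kap :
    Measurable (fun p : (Set.Icc (0:ℝ) 1 × X) × (Set.Icc (0:ℝ) 1 × X) => kap p.1 p.2) := by
  apply Measure.measurable_of_measurable_coe
  intro s hs
  simp only [kap, Measure.add_apply, Measure.smul_apply, smul_eq_mul,
    Measure.dirac_apply' _ hs]
  have h1 : Measurable fun p : (Set.Icc (0:ℝ) 1 × X) × (Set.Icc (0:ℝ) 1 × X) => (p.1.1 : ℝ) :=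
    measurable_subtype_coe.comp (measurable_fst.comp measurable_fst)
  have h2 : Measurable fun p : (Set.Icc (0:ℝ) 1 × X) × (Set.Icc (0:ℝ) 1 × X) => (p.2.1 : ℝ) :=
    measurable_subtype_coe.comp (measurable_fst.comp measurable_snd)
  have hx1 : Measurable fun p : (Set.Icc (0:ℝ) 1 × X) × (Set.Icc (0:ℝ) 1 × X) => p.1.2 :=
    measurable_snd.comp measurable_fst
  have hx2 : Measurable fun p : (Set.Icc (0:ℝ) 1 × X) × (Set.Icc (0:ℝ) 1 × X) => p.2.2 :=
    measurable_snd.comp measurable_snd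
  have hind : ∀ (u v : Set.Icc (0:ℝ) 1),
      Measurable fun p : (Set.Icc (0:ℝ) 1 × X) × (Set.Icc (0:ℝ) 1 × X) =>
        s.indicator (1 : ((Set.Icc (0:ℝ) 1 × X) × (Set.Icc (0:ℝ) 1 × X)) → ℝ≥0∞) ((u, p.1.2), (v, p.2.2)) := fun u v =>
    (measurable_one.indicator hs).comp
      (((measurable_const.prodMk hx1)).prodMk ((measurable_const.prodMk hx2)))
  exact ((((h1.min h2).ennreal_ofReal.mul (hind fe0 fe0)).add
      ((((measurable_const.sub h1).min (measurable_const.sub h2)).ennreal_ofReal).mul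
        (hind fe1 fe1))).add
      (((h2.sub h1).ennreal_ofReal).mul (hind fe1 fe0))).add
      (((h1.sub h2).ennreal_ofReal).mul (hind fe0 fe1))


lemma kap_apply_fst (y y' : Set.Icc (0:ℝ) 1 × X) {s : Set (Set.Icc (0:ℝ) 1 × X)}
    (hs : MeasurableSet s) : kap y y' (Prod.fst ⁻¹' s) = flipM y s := by
  have hps : MeasurableSet (Prod.fst ⁻¹' s :
      Set ((Set.Icc (0:ℝ) 1 × X) × (Set.Icc (0:ℝ) 1 × X))) := measurable_fst hs
  have e1 : ENNReal.ofReal (min (y.1:ℝ) (y'.1:ℝ)) + ENNReal.ofReal ((y.1:ℝ) - (y'.1:ℝ))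
      = ENNReal.ofReal (y.1:ℝ) := hmin _ _ y'.1.2.1
  have e2 : ENNReal.ofReal (min (1 - (y.1:ℝ)) (1 - (y'.1:ℝ)))
        + ENNReal.ofReal ((y'.1:ℝ) - (y.1:ℝ)) = ENNReal.ofReal (1 - (y.1:ℝ)) := by
    have h34 : (y'.1:ℝ) - (y.1:ℝ) = (1 - (y.1:ℝ)) - (1 - (y'.1:ℝ)) := by ring
    rw [h34]; exact hmin _ _ (by linarith [y'.1.2.2] : (0:ℝ) ≤ 1 - (y'.1:ℝ))
  simp only [kap, flipM, Measure.add_apply, Measure.smul_apply, smul_eq_mul,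
    Measure.dirac_apply' _ hps, Measure.dirac_apply' _ hs, Set.indicator_apply,
    Set.mem_preimage]
  by_cases hA : ((fe0 : Set.Icc (0:ℝ) 1), y.2) ∈ s <;>
      by_cases hB : ((fe1 : Set.Icc (0:ℝ) 1), y.2) ∈ s
  · simp [hA, hB, -ENNReal.ofReal_min]; rw [← e1, ← e2]; ring
  · simp [hA, hB, -ENNReal.ofReal_min]; rw [← e1]
  · simp [hA, hB, -ENNReal.ofReal_min]; exact e2
  · simp [hA, hB]

lemma kap_apply_snd (y y' : Set.Icc (0:ℝ) 1 × X) {s : Set (Set.Icc (0:ℝ) 1 × X)}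
    (hs : MeasurableSet s) : kap y y' (Prod.snd ⁻¹' s) = flipM y' s := by
  have hps : MeasurableSet (Prod.snd ⁻¹' s :
      Set ((Set.Icc (0:ℝ) 1 × X) × (Set.Icc (0:ℝ) 1 × X))) := measurable_snd hs
  have e1 : ENNReal.ofReal (min (y.1:ℝ) (y'.1:ℝ)) + ENNReal.ofReal ((y'.1:ℝ) - (y.1:ℝ))
      = ENNReal.ofReal (y'.1:ℝ) := by rw [min_comm]; exact hmin _ _ y.1.2.1
  have e2 : ENNReal.ofReal (min (1 - (y.1:ℝ)) (1 - (y'.1:ℝ)))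
        + ENNReal.ofReal ((y.1:ℝ) - (y'.1:ℝ)) = ENNReal.ofReal (1 - (y'.1:ℝ)) := by
    have h34 : (y.1:ℝ) - (y'.1:ℝ) = (1 - (y'.1:ℝ)) - (1 - (y.1:ℝ)) := by ring
    rw [h34, min_comm]; exact hmin _ _ (by linarith [y.1.2.2] : (0:ℝ) ≤ 1 - (y.1:ℝ))
  simp only [kap, flipM, Measure.add_apply, Measure.smul_apply, smul_eq_mul,
    Measure.dirac_apply' _ hps, Measure.dirac_apply' _ hs, Set.indicator_apply,
    Set.mem_preimage]
  by_cases hA : ((fe0 : Set.Icc (0:ℝ) 1), y'.2) ∈ s <;>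
      by_cases hB : ((fe1 : Set.Icc (0:ℝ) 1), y'.2) ∈ s
  · simp [hA, hB, -ENNReal.ofReal_min]; rw [← e1, ← e2]; ring
  · simp [hA, hB, -ENNReal.ofReal_min]; rw [← e1]
  · simp [hA, hB, -ENNReal.ofReal_min]; exact e2
  · simp [hA, hB]

lemma kap_univ (y y' : Set.Icc (0:ℝ) 1 × X) : kap y y' Set.univ = 1 := by
  have h := kap_apply_fst (X := X) y y' MeasurableSet.univ
  rw [Set.preimage_univ] at h
  rw [h, flipM, Measure.add_apply, Measure.smul_apply, Measure.smul_apply,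
    measure_univ, measure_univ, smul_eq_mul, smul_eq_mul, mul_one, mul_one,
    ← ENNReal.ofReal_add y.1.2.1 (by linarith [y.1.2.2] : (0:ℝ) ≤ 1 - (y.1:ℝ))]
  norm_num


lemma dpow {X : Type*} [MetricSpace X] (q : ℝ) (hq : 1 ≤ q) (y y' : Set.Icc (0:ℝ) 1 × X) :
    dAlphaQ dist (1/q) q y y' ^ q = |(y.1:ℝ) - (y'.1:ℝ)| + dist y.2 y'.2 ^ q := by
  have hq0 : (0:ℝ) < q := lt_of_lt_of_le one_pos hq
  have h1 : 1/q * q = 1 := by field_simp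
  unfold dAlphaQ
  rw [h1, Real.rpow_one]
  have hA : (0:ℝ) ≤ |(y.1:ℝ) - (y'.1:ℝ)| + dist y.2 y'.2 ^ q :=
    add_nonneg (abs_nonneg _) (Real.rpow_nonneg dist_nonneg q)
  rw [← Real.rpow_mul hA, h1, Real.rpow_one]

lemma measurable_cost {X : Type*} [MetricSpace X] [MeasurableSpace X] [BorelSpace X]
    [TopologicalSpace.SeparableSpace X] (q : ℝ) (hq : 1 ≤ q) :
    Measurable (fun zz : (Set.Icc (0:ℝ) 1 × X) × (Set.Icc (0:ℝ) 1 × X) =>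
      ENNReal.ofReal (dAlphaQ dist (1/q) q zz.1 zz.2 ^ q)) := by
  haveI : SecondCountableTopology X := UniformSpace.secondCountable_of_separable X
  simp only [dpow q hq]
  have hc : Continuous fun zz : (Set.Icc (0:ℝ) 1 × X) × (Set.Icc (0:ℝ) 1 × X) =>
      |((zz.1.1 : ℝ)) - (zz.2.1 : ℝ)| + dist zz.1.2 zz.2.2 ^ q := by
    apply Continuous.add
    · exact ((continuous_subtype_val.comp (continuous_fst.comp continuous_fst)).sub
        (continuous_subtype_val.comp (continuous_fst.comp continuous_snd))).abs
    · exact (Continuous.dist (continuous_snd.comp continuous_fst)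
        (continuous_snd.comp continuous_snd)).rpow_const fun _ => Or.inr (by linarith)
  exact (ENNReal.continuous_ofReal.comp hc).measurable

lemma cost_arith (t t' D : ℝ) (ht : 0 ≤ t) (ht1 : t ≤ 1) (ht' : 0 ≤ t') (ht'1 : t' ≤ 1)
    (hD : 0 ≤ D) :
    ENNReal.ofReal (min t t') * ENNReal.ofReal D
      + ENNReal.ofReal (min (1-t) (1-t')) * ENNReal.ofReal D
      + ENNReal.ofReal (t' - t) * ENNReal.ofReal (1 + D)
      + ENNReal.ofReal (t - t') * ENNReal.ofReal (1 + D)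
      = ENNReal.ofReal (|t - t'| + D) := by
  rcases le_total t t' with h | h
  · rw [min_eq_left h, min_eq_right (by linarith : (1:ℝ)-t' ≤ 1-t),
      abs_of_nonpos (by linarith : t - t' ≤ 0),
      ENNReal.ofReal_eq_zero.mpr (by linarith : t - t' ≤ 0), zero_mul, add_zero,
      ← ENNReal.ofReal_mul ht, ← ENNReal.ofReal_mul (by linarith : (0:ℝ) ≤ 1 - t'),
      ← ENNReal.ofReal_mul (by linarith : (0:ℝ) ≤ t' - t),
      ← ENNReal.ofReal_add (mul_nonneg ht hD) (mul_nonneg (by linarith) hD),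
      ← ENNReal.ofReal_add (by nlinarith) (mul_nonneg (by linarith) (by linarith))]
    congr 1; ring
  · rw [min_eq_right h, min_eq_left (by linarith : (1:ℝ)-t ≤ 1-t'),
      abs_of_nonneg (by linarith : 0 ≤ t - t'),
      ENNReal.ofReal_eq_zero.mpr (by linarith : t' - t ≤ 0), zero_mul, add_zero,
      ← ENNReal.ofReal_mul ht', ← ENNReal.ofReal_mul (by linarith : (0:ℝ) ≤ 1 - t),
      ← ENNReal.ofReal_mul (by linarith : (0:ℝ) ≤ t - t'),
      ← ENNReal.ofReal_add (mul_nonneg ht' hD) (mul_nonneg (by linarith) hD),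
      ← ENNReal.ofReal_add (by nlinarith) (mul_nonneg (by linarith) (by linarith))]
    congr 1; ring

lemma kap_cost {X : Type*} [MetricSpace X] [MeasurableSpace X] [BorelSpace X]
    [TopologicalSpace.SeparableSpace X] (q : ℝ) (hq : 1 ≤ q) (y y' : Set.Icc (0:ℝ) 1 × X) :
    ∫⁻ zz, ENNReal.ofReal (dAlphaQ dist (1/q) q zz.1 zz.2 ^ q) ∂(kap y y')
      = ENNReal.ofReal (dAlphaQ dist (1/q) q y y' ^ q) := by
  rw [kap, lintegral_add_measure, lintegral_add_measure, lintegral_add_measure,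
    lintegral_smul_measure, lintegral_smul_measure, lintegral_smul_measure,
    lintegral_smul_measure, lintegral_dirac' _ (measurable_cost q hq),
    lintegral_dirac' _ (measurable_cost q hq), lintegral_dirac' _ (measurable_cost q hq),
    lintegral_dirac' _ (measurable_cost q hq)]
  simp only [dpow q hq]
  have hfe0 : ((fe0 : Set.Icc (0:ℝ) 1) : ℝ) = 0 := rfl
  have hfe1 : ((fe1 : Set.Icc (0:ℝ) 1) : ℝ) = 1 := rfl
  simp only [hfe0, hfe1]
  simp only [sub_self, abs_zero, zero_add, show |(1:ℝ) - 0| = 1 by norm_num,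
    show |(0:ℝ) - 1| = 1 by norm_num]

  exact cost_arith _ _ _ y.1.2.1 y.1.2.2 y'.1.2.1 y'.1.2.2 (Real.rpow_nonneg (dist_nonneg (x := y.2) (y := y'.2)) q)


variable {X₂ : Type*} [MetricSpace X₂] [MeasurableSpace X₂] [BorelSpace X₂]
  [TopologicalSpace.SeparableSpace X₂]

lemma map_fst_bind_kap (π : Measure ((Set.Icc (0:ℝ) 1 × X) × (Set.Icc (0:ℝ) 1 × X))) :
    (π.bind fun p => kap p.1 p.2).map Prod.fst = (π.map Prod.fst).bind flipM := by
  ext s hs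
  rw [Measure.map_apply measurable_fst hs,
    Measure.bind_apply (measurable_fst hs) measurable_kap.aemeasurable,
    Measure.bind_apply hs measurable_flipM.aemeasurable,
    lintegral_map (measurable_flipM_apply hs) measurable_fst]
  exact lintegral_congr fun p => kap_apply_fst p.1 p.2 hs

lemma map_snd_bind_kap (π : Measure ((Set.Icc (0:ℝ) 1 × X) × (Set.Icc (0:ℝ) 1 × X))) :
    (π.bind fun p => kap p.1 p.2).map Prod.snd = (π.map Prod.snd).bind flipM := by
  ext s hs
  rw [Measure.map_apply measurable_snd hs,
    Measure.bind_apply (measurable_snd hs) measurable_kap.aemeasurable,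
    Measure.bind_apply hs measurable_flipM.aemeasurable,
    lintegral_map (measurable_flipM_apply hs) measurable_snd]
  exact lintegral_congr fun p => kap_apply_snd p.1 p.2 hs

lemma isProb_bind_kap (π : Measure ((Set.Icc (0:ℝ) 1 × X) × (Set.Icc (0:ℝ) 1 × X)))
    [IsProbabilityMeasure π] : IsProbabilityMeasure (π.bind fun p => kap p.1 p.2) := by
  constructor
  rw [Measure.bind_apply MeasurableSet.univ measurable_kap.aemeasurable]
  simp [kap_univ]

lemma cost_bind_kap (q : ℝ) (hq : 1 ≤ q)
    (π : Measure ((Set.Icc (0:ℝ) 1 × X₂) × (Set.Icc (0:ℝ) 1 × X₂))) :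
    ∫⁻ zz, ENNReal.ofReal (dAlphaQ dist (1/q) q zz.1 zz.2 ^ q) ∂(π.bind fun p => kap p.1 p.2)
      = ∫⁻ zz, ENNReal.ofReal (dAlphaQ dist (1/q) q zz.1 zz.2 ^ q) ∂π := by
  rw [Measure.lintegral_bind measurable_kap.aemeasurable (measurable_cost q hq).aemeasurable]
  exact lintegral_congr fun p => kap_cost q hq p.1 p.2

lemma bind_flipM_eq {m : ℕ} (a : Fin m → ℝ) (ha : ∀ j, 0 ≤ a j)
    (t : Fin m → Set.Icc (0:ℝ) 1) (x : Fin m → X) :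
    (∑ j, ENNReal.ofReal (a j) • Measure.dirac (t j, x j)
        : Measure (Set.Icc (0:ℝ) 1 × X)).bind flipM
      = ∑ j, (ENNReal.ofReal (a j * (t j : ℝ)) • Measure.dirac (fe0, x j)
            + ENNReal.ofReal (a j * (1 - (t j : ℝ))) • Measure.dirac (fe1, x j)) := by
  ext s hs
  rw [Measure.bind_apply hs measurable_flipM.aemeasurable,
    lintegral_sum_smul_dirac _ _ _ _ (measurable_flipM_apply hs),
    Measure.finset_sum_apply]
  refine Finset.sum_congr rfl fun j _ => ?_
  simp only [flipM, Measure.add_apply, Measure.smul_apply, smul_eq_mul]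
  rw [mul_add, ← mul_assoc, ← mul_assoc, ← ENNReal.ofReal_mul (ha j),
    ← ENNReal.ofReal_mul (ha j)]

lemma isProb_sum {m : ℕ} (a : Fin m → ℝ) (ha : ∀ j, 0 ≤ a j) (hsa : ∑ j, a j = 1)
    (z : Fin m → Set.Icc (0:ℝ) 1 × X) :
    IsProbabilityMeasure
      (∑ j, ENNReal.ofReal (a j) • Measure.dirac (z j) : Measure (Set.Icc (0:ℝ) 1 × X)) := by
  constructor
  rw [Measure.finset_sum_apply]
  simp only [Measure.smul_apply, measure_univ, smul_eq_mul, mul_one]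
  rw [← ENNReal.ofReal_sum_of_nonneg (fun i _ => ha i), hsa, ENNReal.ofReal_one]

lemma wCost_prod_ne_top (q : ℝ) (hq : 1 ≤ q) {m n : ℕ}
    (a : Fin m → ℝ) (b : Fin n → ℝ)
    (z : Fin m → Set.Icc (0:ℝ) 1 × X₂) (w : Fin n → Set.Icc (0:ℝ) 1 × X₂)
    (μ ν : Measure (Set.Icc (0:ℝ) 1 × X₂))
    (hμ : μ = ∑ j, ENNReal.ofReal (a j) • Measure.dirac (z j))
    (hν : ν = ∑ k, ENNReal.ofReal (b k) • Measure.dirac (w k))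
    [SFinite ν] :
    ∫⁻ zz, ENNReal.ofReal (dAlphaQ dist (1/q) q zz.1 zz.2 ^ q) ∂(μ.prod ν) ≠ ⊤ := by
  rw [lintegral_prod _ (measurable_cost q hq).aemeasurable, hμ,
    lintegral_sum_smul_dirac _ _ _ _ ((measurable_cost q hq).lintegral_prod_right')]
  refine (ENNReal.sum_lt_top.mpr fun j _ => ?_).ne
  refine ENNReal.mul_lt_top ENNReal.ofReal_lt_top ?_
  rw [hν]
  have hin := lintegral_sum_smul_dirac (Finset.univ : Finset (Fin n))
      (fun k => ENNReal.ofReal (b k)) w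
      (fun y => ENNReal.ofReal (dAlphaQ dist (1/q) q (z j, y).1 (z j, y).2 ^ q))
      ((measurable_cost q hq).comp measurable_prodMk_left)
  rw [hin]
  exact ENNReal.sum_lt_top.mpr fun k _ =>
    ENNReal.mul_lt_top ENNReal.ofReal_lt_top ENNReal.ofReal_lt_top

end FlipAux

/-- For the metric `d_{1/q,q}` on `Y = [0,1] × X` and finitely supported
probability measures `μ`, `ν`, the "flipped" measures `μ̃`, `ν̃` satisfy
`d_{W_q}(μ̃, ν̃) ≤ d_{W_q}(μ, ν)`; in fact every coupling of `μ` and `ν` gives rise to a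
coupling of `μ̃` and `ν̃` with the same transport cost. -/


theorem flip_decreases_wasserstein
    {X : Type*} [MetricSpace X] [CompleteSpace X] [TopologicalSpace.SeparableSpace X]
    [MeasurableSpace X] [BorelSpace X]
    (q : ℝ) (hq : 1 ≤ q) (m n : ℕ)
    (a : Fin m → ℝ) (b : Fin n → ℝ) (ha : ∀ j, 0 < a j) (hb : ∀ k, 0 < b k)
    (hsa : ∑ j, a j = 1) (hsb : ∑ k, b k = 1)
    (t : Fin m → Set.Icc (0:ℝ) 1) (x : Fin m → X)
    (t' : Fin n → Set.Icc (0:ℝ) 1) (x' : Fin n → X) :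
    let d : (Set.Icc (0:ℝ) 1 × X) → (Set.Icc (0:ℝ) 1 × X) → ℝ := dAlphaQ dist (1/q) q
    let zero : Set.Icc (0:ℝ) 1 := ⟨0, Set.left_mem_Icc.mpr zero_le_one⟩
    let one : Set.Icc (0:ℝ) 1 := ⟨1, Set.right_mem_Icc.mpr zero_le_one⟩
    let μ : Measure (Set.Icc (0:ℝ) 1 × X) :=
      ∑ j, ENNReal.ofReal (a j) • Measure.dirac (t j, x j)
    let ν : Measure (Set.Icc (0:ℝ) 1 × X) :=
      ∑ k, ENNReal.ofReal (b k) • Measure.dirac (t' k, x' k)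
    let μt : Measure (Set.Icc (0:ℝ) 1 × X) :=
      ∑ j, (ENNReal.ofReal (a j * (t j : ℝ)) • Measure.dirac (zero, x j)
            + ENNReal.ofReal (a j * (1 - (t j : ℝ))) • Measure.dirac (one, x j))
    let νt : Measure (Set.Icc (0:ℝ) 1 × X) :=
      ∑ k, (ENNReal.ofReal (b k * (t' k : ℝ)) • Measure.dirac (zero, x' k)
            + ENNReal.ofReal (b k * (1 - (t' k : ℝ))) • Measure.dirac (one, x' k))
    wDist d q μt νt ≤ wDist d q μ ν ∧
      ∀ π : Measure ((Set.Icc (0:ℝ) 1 × X) × (Set.Icc (0:ℝ) 1 × X)),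
        IsProbabilityMeasure π → IsCoupling π μ ν →
        ∃ π' : Measure ((Set.Icc (0:ℝ) 1 × X) × (Set.Icc (0:ℝ) 1 × X)),
          IsProbabilityMeasure π' ∧ IsCoupling π' μt νt ∧ wCost d q π' = wCost d q π := by
  intro d zero one μ ν μt νt
  haveI hμp : IsProbabilityMeasure μ := FlipAux.isProb_sum a (fun j => (ha j).le) hsa _
  haveI hνp : IsProbabilityMeasure ν := FlipAux.isProb_sum b (fun k => (hb k).le) hsb _
  have key : ∀ π : Measure ((Set.Icc (0:ℝ) 1 × X) × (Set.Icc (0:ℝ) 1 × X)),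
      IsProbabilityMeasure π → IsCoupling π μ ν →
      ∃ π' : Measure ((Set.Icc (0:ℝ) 1 × X) × (Set.Icc (0:ℝ) 1 × X)),
        IsProbabilityMeasure π' ∧ IsCoupling π' μt νt ∧ wCost d q π' = wCost d q π := by
    intro π hπ hc
    haveI := hπ
    refine ⟨π.bind (fun p => FlipAux.kap p.1 p.2), FlipAux.isProb_bind_kap π, ⟨?_, ?_⟩, ?_⟩
    · rw [FlipAux.map_fst_bind_kap, hc.1]
      exact (FlipAux.bind_flipM_eq a (fun j => (ha j).le) t x).trans rfl
    · rw [FlipAux.map_snd_bind_kap, hc.2]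
      exact (FlipAux.bind_flipM_eq b (fun k => (hb k).le) t' x').trans rfl
    · exact FlipAux.cost_bind_kap q hq π
  refine ⟨?_, key⟩
  have hcoupl_prod : IsCoupling (μ.prod ν) μ ν := by
    constructor <;> simp
  have hfin : (⨅ π ∈ {π : Measure ((Set.Icc (0:ℝ) 1 × X) × (Set.Icc (0:ℝ) 1 × X)) |
      IsProbabilityMeasure π ∧ IsCoupling π μ ν}, wCost d q π) ≠ ⊤ := by
    refine ne_top_of_le_ne_top ?_ (iInf₂_le (μ.prod ν) ⟨by infer_instance, hcoupl_prod⟩)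
    exact FlipAux.wCost_prod_ne_top q hq a b (fun j => (t j, x j)) (fun k => (t' k, x' k))
      μ ν rfl rfl
  have hle : (⨅ π ∈ {π : Measure ((Set.Icc (0:ℝ) 1 × X) × (Set.Icc (0:ℝ) 1 × X)) |
        IsProbabilityMeasure π ∧ IsCoupling π μt νt}, wCost d q π)
      ≤ (⨅ π ∈ {π : Measure ((Set.Icc (0:ℝ) 1 × X) × (Set.Icc (0:ℝ) 1 × X)) |
        IsProbabilityMeasure π ∧ IsCoupling π μ ν}, wCost d q π) := by
    refine le_iInf₂ fun π hπ => ?_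
    obtain ⟨π', h1, h2, h3⟩ := key π hπ.1 hπ.2
    exact (iInf₂_le π' ⟨h1, h2⟩).trans_eq h3
  have h1q : (0:ℝ) ≤ 1 / q := by positivity
  unfold wDist
  exact ENNReal.toReal_mono (ENNReal.rpow_ne_top_of_nonneg h1q hfin)
    (ENNReal.rpow_le_rpow hle h1q)
end
end

section
/- Let (X, d_X) be a perfect, complete and separable metric space, q ≥ 1, and set Y = [0,1]×X with the metric d_{1/q,q}((t,x),(t',x')) = (|t−t'| + d_X(x,x')^q)^{1/q}. Then the set of finitely supported probability measures Σ_{i=1}^N a_i δ_{(t_i,x_i)} whose supporting points have pairwise distinct X-coordinates (x_i ≠ x_j for i ≠ j) is dense in the metric space 𝒲_q(Y, d_{1/q,q}). -/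
open MeasureTheory
open scoped ENNReal

noncomputable section

/-- In a perfect metric space we may find, near any point, a point avoiding a given
finite set. -/
private lemma exists_avoid_finite {X : Type*} [MetricSpace X]
    (hperf : Perfect (Set.univ : Set X)) {S : Set X} (hS : S.Finite) (c : X) {δ : ℝ}
    (hδ : 0 < δ) : ∃ x', dist x' c < δ ∧ x' ∉ S := by
  have hacc := hperf.acc c (Set.mem_univ c)
  rw [accPt_iff_nhds] at hacc
  have hU : Metric.ball c δ ∩ (S \ {c})ᶜ ∈ nhds c := by
    refine Filter.inter_mem (Metric.ball_mem_nhds c hδ) ?_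
    refine IsOpen.mem_nhds ((hS.subset Set.diff_subset).isClosed.isOpen_compl) ?_
    simp
  obtain ⟨y, ⟨hy1, _⟩, hy2⟩ := hacc _ hU
  refine ⟨y, hy1.1, fun hyS => hy1.2 ⟨hyS, hy2⟩⟩

/-- In a perfect metric space we may choose injectively points close to any finite
family of centers. -/
private lemma exists_inj_close {X : Type*} [MetricSpace X]
    (hperf : Perfect (Set.univ : Set X)) {δ : ℝ} (hδ : 0 < δ) :
    ∀ (m : ℕ) (c : Fin m → X), ∃ f : Fin m → X, Function.Injective f ∧
      ∀ i, dist (f i) (c i) < δ := by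
  intro m
  induction m with
  | zero => exact fun c => ⟨Fin.elim0, fun i => i.elim0, fun i => i.elim0⟩
  | succ m ih =>
    intro c
    obtain ⟨f', hinj, hcl⟩ := ih (fun i => c i.castSucc)
    obtain ⟨x', hx'd, hx'S⟩ :=
      exists_avoid_finite hperf (Set.finite_range f') (c (Fin.last m)) hδ
    refine ⟨fun i => if h : (i : ℕ) < m then f' ⟨i, h⟩ else x', ?_, ?_⟩
    · intro i j hij
      by_cases hi : (i : ℕ) < m <;> by_cases hj : (j : ℕ) < m <;>
        simp only [hi, hj, dif_pos, dif_neg, not_false_iff] at hij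
      · have := hinj hij
        exact Fin.ext (congrArg Fin.val this : ((⟨(i : ℕ), hi⟩ : Fin m) : ℕ) = _)
      · exact absurd ⟨⟨(i : ℕ), hi⟩, hij⟩ hx'S
      · exact absurd ⟨⟨(j : ℕ), hj⟩, hij.symm⟩ hx'S
      · exact Fin.ext (by omega)
    · intro i
      by_cases hi : (i : ℕ) < m
      · simp only [hi, dif_pos]
        have := hcl ⟨(i : ℕ), hi⟩
        have hc : (⟨(i : ℕ), hi⟩ : Fin m).castSucc = i := Fin.ext rfl
        rwa [hc] at this
      · simp only [hi, dif_neg, not_false_iff]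
        have : i = Fin.last m := Fin.ext (by simp only [Fin.val_last]; omega)
        rwa [this]

/-- If `X` is perfect, complete and separable, then in the
`q`-Wasserstein space over `([0,1] × X, d_{1/q,q})` the finitely supported probability
measures whose supporting points have pairwise distinct `X`-coordinates form a dense
family. -/
theorem dense_finitely_supported_distinct_snd
    {X : Type*} [MetricSpace X] [CompleteSpace X] [TopologicalSpace.SeparableSpace X]
    [MeasurableSpace X] [BorelSpace X]
    (hperf : Perfect (Set.univ : Set X)) (q : ℝ) (hq : 1 ≤ q) :
    ∀ μ : Measure (Set.Icc (0:ℝ) 1 × X), memW (dAlphaQ dist (1/q) q) q μ →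
      ∀ ε : ℝ, 0 < ε →
        ∃ (N : ℕ) (a : Fin N → ℝ) (y : Fin N → Set.Icc (0:ℝ) 1 × X),
          (∀ i, 0 ≤ a i) ∧ (∑ i, a i = 1) ∧
          (∀ i j, i ≠ j → (y i).2 ≠ (y j).2) ∧
          wDist (dAlphaQ dist (1/q) q) q μ
            (∑ i, ENNReal.ofReal (a i) • Measure.dirac (y i)) < ε := by
  classical
  set Y := Set.Icc (0:ℝ) 1 × X
  intro μ hμ ε hε
  obtain ⟨hprob, z0, hz0⟩ := hμ
  have hq0 : (0:ℝ) < q := lt_of_lt_of_le one_pos hq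
  have hqne : q ≠ 0 := ne_of_gt hq0
  -- the key pointwise identity for `dAlphaQ ^ q`
  have hd : ∀ y y' : Y,
      dAlphaQ dist (1/q) q y y' ^ q = |(y.1 : ℝ) - (y'.1 : ℝ)| + dist y.2 y'.2 ^ q := by
    intro y y'
    have h1 : 1 / q * q = 1 := one_div_mul_cancel hqne
    unfold dAlphaQ
    rw [h1, Real.rpow_one]
    have hb : (0:ℝ) ≤ |(y.1 : ℝ) - (y'.1 : ℝ)| + dist y.2 y'.2 ^ q :=
      add_nonneg (abs_nonneg _) (Real.rpow_nonneg dist_nonneg _)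
    rw [← Real.rpow_mul hb, h1, Real.rpow_one]
  -- measurability of the cost integrand
  have hFmeas : Measurable (fun zz : Y × Y =>
      ENNReal.ofReal (dAlphaQ dist (1/q) q zz.1 zz.2 ^ q)) := by
    have : (fun zz : Y × Y => ENNReal.ofReal (dAlphaQ dist (1/q) q zz.1 zz.2 ^ q)) =
        fun zz : Y × Y =>
          ENNReal.ofReal (|(zz.1.1 : ℝ) - (zz.2.1 : ℝ)| + dist zz.1.2 zz.2.2 ^ q) := by
      funext zz; rw [hd]
    rw [this]
    apply ENNReal.measurable_ofReal.comp
    apply Measurable.add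
    · exact ((continuous_subtype_val.comp (continuous_fst.comp continuous_fst)).sub
        (continuous_subtype_val.comp (continuous_fst.comp continuous_snd))).abs.measurable
    · exact (Measurable.pow_const
        (continuous_dist.comp ((continuous_snd.comp continuous_fst).prodMk
          (continuous_snd.comp continuous_snd))).measurable q)
  -- the second-coordinate moment function
  set g : Y → ℝ≥0∞ := fun z => ENNReal.ofReal (dist z.2 z0.2 ^ q) with hgdef
  have hgmeas : Measurable g := by
    apply ENNReal.measurable_ofReal.comp
    exact Measurable.pow_const
      (continuous_dist.comp (continuous_snd.prodMk continuous_const)).measurable q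
  have hgle : ∀ z : Y, g z ≤ ENNReal.ofReal (dAlphaQ dist (1/q) q z z0 ^ q) := by
    intro z
    rw [hd]
    exact ENNReal.ofReal_le_ofReal (le_add_of_nonneg_left (abs_nonneg _))
  have hgint : ∫⁻ z, g z ∂μ ≠ ⊤ :=
    ne_top_of_le_ne_top hz0 (lintegral_mono hgle)
  -- constants
  set ε' : ℝ := (ε/2) ^ q with hε'def
  have hε' : 0 < ε' := Real.rpow_pos_of_pos (by linarith) q
  have h2q : (0:ℝ) < 2 ^ q := Real.rpow_pos_of_pos two_pos q
  set δ : ℝ := min 1 (ε' / (2 * (1 + 2 ^ q))) with hδdef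
  have hδpos : 0 < δ := lt_min one_pos (by positivity)
  have hδ1 : δ ≤ 1 := min_le_left _ _
  have hδq : δ ^ q ≤ δ := by
    calc δ ^ q ≤ δ ^ (1:ℝ) := Real.rpow_le_rpow_of_exponent_ge hδpos hδ1 hq
    _ = δ := Real.rpow_one δ
  have hβ : (1 + 2 ^ q) * δ ≤ ε' / 2 := by
    have h := min_le_right 1 (ε' / (2 * (1 + 2 ^ q)))
    rw [← hδdef] at h
    calc (1 + 2 ^ q) * δ ≤ (1 + 2 ^ q) * (ε' / (2 * (1 + 2 ^ q))) :=
          mul_le_mul_of_nonneg_left h (by positivity)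
    _ = ε' / 2 := by field_simp
  set K : ℝ := 1 + 2 ^ q with hKdef
  set c0 : ℝ := 1 + 2 * 2 ^ q with hc0def
  have hc0 : 0 < c0 := by positivity
  set θ : ℝ := ε' / (2 * c0) with hθdef
  have hθ : 0 < θ := by positivity
  -- the elementary rpow inequality
  have hpow2 : ∀ a b : ℝ, 0 ≤ a → 0 ≤ b → (a + b) ^ q ≤ 2 ^ q * (a ^ q + b ^ q) := by
    intro a b ha hb
    have h1 : a + b ≤ 2 * max a b := by
      rcases le_total a b with h | h
      · simp [max_eq_right h]; linarith
      · simp [max_eq_left h]; linarith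
    have hmax : (0:ℝ) ≤ max a b := le_max_of_le_left ha
    calc (a + b) ^ q ≤ (2 * max a b) ^ q :=
          Real.rpow_le_rpow (by linarith) h1 (le_of_lt hq0)
    _ = 2 ^ q * (max a b) ^ q := Real.mul_rpow (by norm_num) hmax
    _ ≤ 2 ^ q * (a ^ q + b ^ q) := by
        apply mul_le_mul_of_nonneg_left _ (le_of_lt h2q)
        rcases le_total a b with h | h
        · rw [max_eq_right h]
          exact le_add_of_nonneg_left (Real.rpow_nonneg ha q)
        · rw [max_eq_left h]
          exact le_add_of_nonneg_right (Real.rpow_nonneg hb q)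
  -- a dense sequence in `Y`
  have hY : Nonempty Y := ⟨z0⟩
  obtain ⟨e, he⟩ := TopologicalSpace.exists_dense_seq Y
  -- the increasing covering by balls
  set V : ℕ → Set Y := fun k => ⋃ j, ⋃ (_ : j < k), Metric.ball (e j) δ with hVdef
  have hVmeas : ∀ k, MeasurableSet (V k) := fun k =>
    MeasurableSet.iUnion fun j => MeasurableSet.iUnion fun _ => measurableSet_ball
  have hVmono : Monotone V := by
    intro k k' hk
    exact Set.iUnion_mono fun j => Set.iUnion_subset fun hj =>
      Set.subset_iUnion_of_subset (by omega) (le_refl _)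
  have hVcover : ⋃ k, V k = Set.univ := by
    rw [Set.eq_univ_iff_forall]
    intro z
    obtain ⟨j, hj⟩ := he.exists_dist_lt z hδpos
    exact Set.mem_iUnion.mpr ⟨j + 1, Set.mem_iUnion.mpr ⟨j,
      Set.mem_iUnion.mpr ⟨Nat.lt_succ_self j, Metric.mem_ball.mpr hj⟩⟩⟩
  -- the moment measure
  set ρ : Measure Y := μ.withDensity g with hρdef
  have hρuniv : ρ Set.univ ≠ ⊤ := by
    rw [hρdef, withDensity_apply g MeasurableSet.univ, setLIntegral_univ]
    exact hgint
  -- choose `n` with small remainder mass and moment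
  have htends1 : Filter.Tendsto (fun k => μ (V k)ᶜ) Filter.atTop (nhds 0) := by
    have h := tendsto_measure_iInter_atTop (μ := μ) (s := fun k => (V k)ᶜ)
      (fun k => ((hVmeas k).compl).nullMeasurableSet)
      (fun k k' hk => Set.compl_subset_compl.mpr (hVmono hk)) ⟨0, measure_ne_top μ _⟩
    have : ⋂ k, (V k)ᶜ = (∅ : Set Y) := by
      rw [← Set.compl_iUnion, hVcover, Set.compl_univ]
    rwa [this, measure_empty] at h
  have htends2 : Filter.Tendsto (fun k => ρ (V k)ᶜ) Filter.atTop (nhds 0) := by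
    have h := tendsto_measure_iInter_atTop (μ := ρ) (s := fun k => (V k)ᶜ)
      (fun k => ((hVmeas k).compl).nullMeasurableSet)
      (fun k k' hk => Set.compl_subset_compl.mpr (hVmono hk))
      ⟨0, ne_top_of_le_ne_top hρuniv (measure_mono (Set.subset_univ _))⟩
    have : ⋂ k, (V k)ᶜ = (∅ : Set Y) := by
      rw [← Set.compl_iUnion, hVcover, Set.compl_univ]
    rwa [this, measure_empty] at h
  have hθ0 : (0:ℝ≥0∞) < ENNReal.ofReal θ := ENNReal.ofReal_pos.mpr hθ
  obtain ⟨n, hn1, hn2⟩ :=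
    ((htends1.eventually_lt_const hθ0).and (htends2.eventually_lt_const hθ0)).exists
  -- the measurable partition
  set B : ℕ → Set Y := fun i => if i < n then Metric.ball (e i) δ else Set.univ with hBdef
  have hBmeas : ∀ i, MeasurableSet (B i) := by
    intro i
    simp only [hBdef]
    split_ifs
    · exact measurableSet_ball
    · exact MeasurableSet.univ
  set C : ℕ → Set Y := disjointed B with hCdef
  have hCmeas : ∀ i, MeasurableSet (C i) := MeasurableSet.disjointed hBmeas
  have hCdisj : Pairwise (Function.onFun Disjoint C) := disjoint_disjointed B
  have hCsub : ∀ i, C i ⊆ B i := disjointed_subset B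
  have hCunion : ⋃ i, C i = Set.univ := by
    rw [hCdef, iUnion_disjointed]
    apply Set.eq_univ_of_univ_subset
    have : B n = Set.univ := by rw [hBdef]; simp
    rw [← this]
    exact Set.subset_iUnion B n
  have hCempty : ∀ i, n < i → C i = ∅ := by
    intro i hi
    obtain ⟨k, rfl⟩ : ∃ k, i = k + 1 := ⟨i - 1, by omega⟩
    rw [hCdef, disjointed_add_one]
    have h1 : B n ≤ partialSups B k := le_partialSups_of_le B (by omega)
    have h2 : (partialSups B k : Set Y) = Set.univ := by
      apply Set.eq_univ_of_univ_subset
      have : B n = Set.univ := by rw [hBdef]; simp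
      rw [← this]; exact h1
    rw [h2, Set.diff_univ]
  have hCball : ∀ i, i < n → C i ⊆ Metric.ball (e i) δ := by
    intro i hi
    have := hCsub i
    simpa only [hBdef, if_pos hi] using this
  have hCn : C n ⊆ (V n)ᶜ := by
    intro z hz
    simp only [Set.mem_compl_iff, hVdef, Set.mem_iUnion, not_exists]
    intro j hj hball
    rcases Nat.eq_zero_or_eq_succ_pred n with h0 | hsucc
    · omega
    · rw [hCdef, hsucc, Nat.succ_eq_add_one, disjointed_add_one] at hz
      apply hz.2
      have h1 : B j ≤ partialSups B (n-1) := le_partialSups_of_le B (by omega)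
      apply h1
      simp only [hBdef, if_pos hj]
      exact hball
  -- choose injectively placed support points
  obtain ⟨f, hfinj, hfcl⟩ := exists_inj_close hperf hδpos (n+1)
    (fun i => if (i : ℕ) < n then (e (i : ℕ)).2 else z0.2)
  set yy : ℕ → Y := fun i => if h : i < n then ((e i).1, f ⟨i, by omega⟩)
    else (z0.1, f ⟨n, by omega⟩) with hyydef
  have hyyf : ∀ i : Fin (n+1), (yy (i : ℕ)).2 = f i := by
    intro i
    have hlt := i.isLt
    by_cases h : (i : ℕ) < n
    · simp only [hyydef, dif_pos h]
    · simp only [hyydef, dif_neg h]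
      exact congrArg f (Fin.ext (show n = (i : ℕ) by omega))
  have hfc1 : ∀ i (hi : i < n), dist (f ⟨i, by omega⟩) ((e i).2) < δ := by
    intro i hi
    have := hfcl ⟨i, by omega⟩
    simpa only [if_pos hi] using this
  have hfc2 : dist (f ⟨n, by omega⟩) z0.2 < δ := by
    have := hfcl ⟨n, by omega⟩
    simpa only [if_neg (lt_irrefl n)] using this
  -- the map onto the support points
  have hzC : ∀ z : Y, ∃ i, z ∈ C i := fun z =>
    Set.mem_iUnion.mp (by rw [hCunion]; trivial)
  set idx : Y → ℕ := fun z => Nat.find (hzC z) with hidxdef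
  have hidx1 : ∀ z, z ∈ C (idx z) := fun z => Nat.find_spec (hzC z)
  have hidxle : ∀ z, idx z ≤ n := by
    intro z
    by_contra h
    push_neg at h
    have h2 := hidx1 z
    rw [hCempty _ h] at h2
    exact h2
  have hidxeq : ∀ z i, z ∈ C i → idx z = i := by
    intro z i hzi
    by_contra h
    exact Set.disjoint_left.mp (hCdisj h) (hidx1 z) hzi
  set T : Y → Y := fun z => yy (idx z) with hTdef
  have hTC : ∀ z i, z ∈ C i → T z = yy i := by
    intro z i hzi
    simp only [hTdef]
    exact congrArg yy (hidxeq z i hzi)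
  have hT : Measurable T := by
    intro s _
    have hpre : T ⁻¹' s = ⋃ i, ⋃ (_ : yy i ∈ s), C i := by
      ext z
      simp only [Set.mem_preimage, Set.mem_iUnion]
      constructor
      · intro h
        refine ⟨idx z, ?_, hidx1 z⟩
        rw [← hTC z (idx z) (hidx1 z)]
        exact h
      · rintro ⟨i, his, hzi⟩
        rw [hTC z i hzi]
        exact his
    rw [hpre]
    exact MeasurableSet.iUnion fun i => MeasurableSet.iUnion fun _ => hCmeas i
  -- weights
  have hCne : ∀ i : Fin (n+1), μ (C (i : ℕ)) ≠ ⊤ := fun i => measure_ne_top μ _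
  have hsum1 : ∑ i : Fin (n+1), μ (C (i : ℕ)) = 1 := by
    have h1 : μ (⋃ i, C i) = ∑' i, μ (C i) := measure_iUnion hCdisj hCmeas
    rw [hCunion, measure_univ] at h1
    have h2 : ∑' i, μ (C i) = ∑ i ∈ Finset.range (n+1), μ (C i) := by
      apply tsum_eq_sum
      intro i hi
      rw [hCempty i (by simpa using hi)]
      exact measure_empty
    rw [h2] at h1
    rw [Fin.sum_univ_eq_sum_range (fun i => μ (C i)) (n+1)]
    exact h1.symm
  have hsumr : ∑ i ∈ Finset.range (n+1), μ (C i) = 1 := by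
    rw [← Fin.sum_univ_eq_sum_range (fun i => μ (C i)) (n+1)]
    exact hsum1
  set a : Fin (n+1) → ℝ := fun i => (μ (C (i : ℕ))).toReal with hadef
  have hofa : ∀ i : Fin (n+1), ENNReal.ofReal (a i) = μ (C (i : ℕ)) := fun i =>
    ENNReal.ofReal_toReal (hCne i)
  set ynew : Fin (n+1) → Y := fun i => yy (i : ℕ) with hynewdef
  set ν : Measure Y := ∑ i : Fin (n+1), ENNReal.ofReal (a i) • Measure.dirac (ynew i)
    with hνdef
  -- the pushforward of μ under T is ν
  have hmap : μ.map T = ν := by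
    ext s hs
    rw [Measure.map_apply hT hs]
    have hpre : T ⁻¹' s = ⋃ i ∈ Finset.range (n+1), (if yy i ∈ s then C i else ∅) := by
      ext z
      simp only [Set.mem_preimage, Set.mem_iUnion, Finset.mem_range, exists_prop]
      constructor
      · intro h
        refine ⟨idx z, by have := hidxle z; omega, ?_⟩
        rw [if_pos (by rw [← hTC z (idx z) (hidx1 z)]; exact h)]
        exact hidx1 z
      · rintro ⟨i, hi, hz⟩
        by_cases his : yy i ∈ s
        · rw [if_pos his] at hz
          rw [hTC z i hz]
          exact his
        · rw [if_neg his] at hz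
          exact absurd hz (Set.notMem_empty z)
    have hdisjf : Set.PairwiseDisjoint (↑(Finset.range (n+1)))
        (fun i => if yy i ∈ s then C i else ∅) := by
      intro i _ j _ hij
      refine (hCdisj hij).mono ?_ ?_
      · by_cases hys : yy i ∈ s <;> simp [hys]
      · by_cases hys : yy j ∈ s <;> simp [hys]
    have hmeasf : ∀ i ∈ Finset.range (n+1), MeasurableSet (if yy i ∈ s then C i else ∅) := by
      intro i _
      split_ifs
      exacts [hCmeas i, MeasurableSet.empty]
    rw [hpre, measure_biUnion_finset hdisjf hmeasf, hνdef, Measure.finset_sum_apply,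
      ← Fin.sum_univ_eq_sum_range (fun i => μ (if yy i ∈ s then C i else ∅)) (n+1)]
    apply Finset.sum_congr rfl
    intro i _
    rw [Measure.smul_apply, Measure.dirac_apply' _ hs, hofa]
    by_cases his : ynew i ∈ s
    · rw [Set.indicator_of_mem his, if_pos (show yy (i : ℕ) ∈ s from his)]
      simp
    · rw [Set.indicator_of_notMem his, if_neg (show yy (i : ℕ) ∉ s from his)]
      simp
  -- the coupling
  set G : Y → Y × Y := fun z => (z, T z) with hGdef
  have hG : Measurable G := measurable_id.prodMk hT
  set π : Measure (Y × Y) := μ.map G with hπdef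
  have hπprob : IsProbabilityMeasure π := Measure.isProbabilityMeasure_map hG.aemeasurable
  have hcoupling : IsCoupling π μ ν := by
    constructor
    · rw [hπdef, Measure.map_map measurable_fst hG]
      have h1 : (Prod.fst ∘ G) = id := rfl
      rw [h1, Measure.map_id]
    · rw [hπdef, Measure.map_map measurable_snd hG]
      have h1 : (Prod.snd ∘ G) = T := rfl
      rw [h1, hmap]
  -- the transport cost bound
  have hstep : ∫⁻ z, ENNReal.ofReal (dAlphaQ dist (1/q) q z (T z) ^ q) ∂μ
      ≤ ENNReal.ofReal ε' := by
    rw [← setLIntegral_univ, ← hCunion, lintegral_iUnion hCmeas hCdisj]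
    have htail : ∑' i, ∫⁻ z in C i, ENNReal.ofReal (dAlphaQ dist (1/q) q z (T z) ^ q) ∂μ
        = ∑ i ∈ Finset.range (n+1),
            ∫⁻ z in C i, ENNReal.ofReal (dAlphaQ dist (1/q) q z (T z) ^ q) ∂μ := by
      apply tsum_eq_sum
      intro i hi
      rw [hCempty i (by simpa using hi), Measure.restrict_empty, lintegral_zero_measure]
    rw [htail, Finset.sum_range_succ]
    have hmain : ∑ i ∈ Finset.range n,
        ∫⁻ z in C i, ENNReal.ofReal (dAlphaQ dist (1/q) q z (T z) ^ q) ∂μ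
        ≤ ENNReal.ofReal (ε'/2) := by
      have hbound : ∀ i, i < n →
          ∫⁻ z in C i, ENNReal.ofReal (dAlphaQ dist (1/q) q z (T z) ^ q) ∂μ
          ≤ ENNReal.ofReal (K * δ) * μ (C i) := by
        intro i hi
        have hpt : ∀ z ∈ C i,
            ENNReal.ofReal (dAlphaQ dist (1/q) q z (T z) ^ q) ≤ ENNReal.ofReal (K * δ) := by
          intro z hz
          rw [hTC z i hz, hd]
          apply ENNReal.ofReal_le_ofReal
          have hyyi : yy i = ((e i).1, f ⟨i, by omega⟩) := by
            simp only [hyydef, dif_pos hi]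
          rw [hyyi]
          have hball := hCball i hi hz
          rw [Metric.mem_ball, Prod.dist_eq] at hball
          have hb1 : dist z.1 (e i).1 < δ := lt_of_le_of_lt (le_max_left _ _) hball
          have hb2 : dist z.2 (e i).2 < δ := lt_of_le_of_lt (le_max_right _ _) hball
          have habs : |(z.1 : ℝ) - ((e i).1 : ℝ)| ≤ δ := by
            rw [Subtype.dist_eq, Real.dist_eq] at hb1
            exact le_of_lt hb1
          have hdx : dist z.2 (f ⟨i, by omega⟩) ≤ 2 * δ := by
            calc dist z.2 (f ⟨i, by omega⟩)
                ≤ dist z.2 (e i).2 + dist ((e i).2) (f ⟨i, by omega⟩) := dist_triangle _ _ _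
            _ ≤ δ + δ := by
                have := hfc1 i hi
                rw [dist_comm] at this
                exact add_le_add (le_of_lt hb2) (le_of_lt this)
            _ = 2 * δ := by ring
          have hdxq : dist z.2 (f ⟨i, by omega⟩) ^ q ≤ 2 ^ q * δ := by
            calc dist z.2 (f ⟨i, by omega⟩) ^ q ≤ (2 * δ) ^ q :=
                  Real.rpow_le_rpow dist_nonneg hdx (le_of_lt hq0)
            _ = 2 ^ q * δ ^ q := Real.mul_rpow (by norm_num) (le_of_lt hδpos)
            _ ≤ 2 ^ q * δ := mul_le_mul_of_nonneg_left hδq (le_of_lt h2q)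
          calc |(z.1 : ℝ) - ((e i).1 : ℝ)| + dist z.2 (f ⟨i, by omega⟩) ^ q
              ≤ δ + 2 ^ q * δ := add_le_add habs hdxq
          _ = K * δ := by rw [hKdef]; ring
        calc ∫⁻ z in C i, ENNReal.ofReal (dAlphaQ dist (1/q) q z (T z) ^ q) ∂μ
            ≤ ∫⁻ _ in C i, ENNReal.ofReal (K * δ) ∂μ := setLIntegral_mono' (hCmeas i) hpt
        _ = ENNReal.ofReal (K * δ) * μ (C i) := setLIntegral_const _ _
      calc ∑ i ∈ Finset.range n,
          ∫⁻ z in C i, ENNReal.ofReal (dAlphaQ dist (1/q) q z (T z) ^ q) ∂μ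
          ≤ ∑ i ∈ Finset.range n, ENNReal.ofReal (K * δ) * μ (C i) := by
            apply Finset.sum_le_sum
            intro i hi
            exact hbound i (Finset.mem_range.mp hi)
      _ = ENNReal.ofReal (K * δ) * ∑ i ∈ Finset.range n, μ (C i) := by
            rw [Finset.mul_sum]
      _ ≤ ENNReal.ofReal (K * δ) * 1 := by
            apply mul_le_mul_right
            rw [← hsumr]
            exact Finset.sum_le_sum_of_subset
              (Finset.range_subset_range.mpr (Nat.le_succ n))
      _ = ENNReal.ofReal (K * δ) := mul_one _
      _ ≤ ENNReal.ofReal (ε'/2) := ENNReal.ofReal_le_ofReal hβ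
    have hrem : ∫⁻ z in C n, ENNReal.ofReal (dAlphaQ dist (1/q) q z (T z) ^ q) ∂μ
        ≤ ENNReal.ofReal (ε'/2) := by
      have hpt : ∀ z ∈ C n,
          ENNReal.ofReal (dAlphaQ dist (1/q) q z (T z) ^ q)
          ≤ ENNReal.ofReal K + ENNReal.ofReal (2 ^ q) * g z := by
        intro z hz
        rw [hTC z n hz, hd]
        have hyyn : yy n = (z0.1, f ⟨n, by omega⟩) := by
          simp only [hyydef, dif_neg (lt_irrefl n)]
        rw [hyyn]
        have habs : |(z.1 : ℝ) - (z0.1 : ℝ)| ≤ 1 := by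
          have h1 := z.1.2.1; have h2 := z.1.2.2
          have h3 := z0.1.2.1; have h4 := z0.1.2.2
          rw [abs_le]
          constructor <;> linarith
        have hdx : dist z.2 (f ⟨n, by omega⟩) ≤ dist z.2 z0.2 + δ := by
          calc dist z.2 (f ⟨n, by omega⟩)
              ≤ dist z.2 z0.2 + dist z0.2 (f ⟨n, by omega⟩) := dist_triangle _ _ _
          _ ≤ dist z.2 z0.2 + δ := by
              have := hfc2
              rw [dist_comm] at this
              exact add_le_add_right (le_of_lt this) _
        have hdxq : dist z.2 (f ⟨n, by omega⟩) ^ q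
            ≤ 2 ^ q * dist z.2 z0.2 ^ q + 2 ^ q := by
          calc dist z.2 (f ⟨n, by omega⟩) ^ q ≤ (dist z.2 z0.2 + δ) ^ q :=
                Real.rpow_le_rpow dist_nonneg hdx (le_of_lt hq0)
          _ ≤ 2 ^ q * (dist z.2 z0.2 ^ q + δ ^ q) :=
                hpow2 _ _ dist_nonneg (le_of_lt hδpos)
          _ = 2 ^ q * dist z.2 z0.2 ^ q + 2 ^ q * δ ^ q := by ring
          _ ≤ 2 ^ q * dist z.2 z0.2 ^ q + 2 ^ q := by
                have : δ ^ q ≤ 1 := le_trans hδq hδ1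
                nlinarith [Real.rpow_nonneg (dist_nonneg : (0:ℝ) ≤ dist z.2 z0.2) q]
        have hreal : |(z.1 : ℝ) - (z0.1 : ℝ)| + dist z.2 (f ⟨n, by omega⟩) ^ q
            ≤ K + 2 ^ q * dist z.2 z0.2 ^ q := by
          rw [hKdef]
          linarith
        calc ENNReal.ofReal (|(z.1 : ℝ) - (z0.1 : ℝ)| + dist z.2 (f ⟨n, by omega⟩) ^ q)
            ≤ ENNReal.ofReal (K + 2 ^ q * dist z.2 z0.2 ^ q) :=
              ENNReal.ofReal_le_ofReal hreal
        _ = ENNReal.ofReal K + ENNReal.ofReal (2 ^ q * dist z.2 z0.2 ^ q) := by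
              rw [ENNReal.ofReal_add (by rw [hKdef]; positivity) (by positivity)]
        _ = ENNReal.ofReal K + ENNReal.ofReal (2 ^ q) * g z := by
              rw [ENNReal.ofReal_mul (le_of_lt h2q)]
      calc ∫⁻ z in C n, ENNReal.ofReal (dAlphaQ dist (1/q) q z (T z) ^ q) ∂μ
          ≤ ∫⁻ z in C n, (ENNReal.ofReal K + ENNReal.ofReal (2 ^ q) * g z) ∂μ :=
            setLIntegral_mono' (hCmeas n) hpt
      _ = ENNReal.ofReal K * μ (C n)
            + ENNReal.ofReal (2 ^ q) * ∫⁻ z in C n, g z ∂μ := by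
            rw [lintegral_add_left measurable_const, setLIntegral_const,
              lintegral_const_mul _ hgmeas]
      _ = ENNReal.ofReal K * μ (C n) + ENNReal.ofReal (2 ^ q) * ρ (C n) := by
            rw [hρdef, withDensity_apply g (hCmeas n)]
      _ ≤ ENNReal.ofReal K * ENNReal.ofReal θ + ENNReal.ofReal (2 ^ q) * ENNReal.ofReal θ := by
            apply add_le_add
            · exact mul_le_mul_right (le_of_lt (lt_of_le_of_lt (measure_mono hCn) hn1)) _
            · exact mul_le_mul_right (le_of_lt (lt_of_le_of_lt (measure_mono hCn) hn2)) _
      _ = ENNReal.ofReal (K * θ + 2 ^ q * θ) := by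
            rw [← ENNReal.ofReal_mul (by rw [hKdef]; positivity),
              ← ENNReal.ofReal_mul (le_of_lt h2q),
              ENNReal.ofReal_add (by rw [hKdef]; positivity) (by positivity)]
      _ = ENNReal.ofReal (ε'/2) := by
            congr 1
            rw [hKdef, hθdef, hc0def]
            field_simp
            ring
    calc (∑ i ∈ Finset.range n,
        ∫⁻ z in C i, ENNReal.ofReal (dAlphaQ dist (1/q) q z (T z) ^ q) ∂μ)
        + ∫⁻ z in C n, ENNReal.ofReal (dAlphaQ dist (1/q) q z (T z) ^ q) ∂μ
        ≤ ENNReal.ofReal (ε'/2) + ENNReal.ofReal (ε'/2) := add_le_add hmain hrem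
    _ = ENNReal.ofReal ε' := by
        rw [← ENNReal.ofReal_add (by positivity) (by positivity)]
        congr 1
        ring
  have hcost : wCost (dAlphaQ dist (1/q) q) q π ≤ ENNReal.ofReal ε' := by
    unfold wCost
    rw [hπdef, lintegral_map hFmeas hG]
    exact hstep
  -- conclusion
  refine ⟨n+1, a, ynew, fun i => ENNReal.toReal_nonneg, ?_, ?_, ?_⟩
  · simp only [hadef]
    rw [← ENNReal.toReal_sum (fun (i : Fin (n+1)) _ => hCne i), hsum1, ENNReal.toReal_one]
  · intro i j hij
    show (yy (i : ℕ)).2 ≠ (yy (j : ℕ)).2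
    rw [hyyf i, hyyf j]
    exact fun hfe => hij (hfinj hfe)
  · have hI : (⨅ π' ∈ {π' : Measure (Y × Y) |
        IsProbabilityMeasure π' ∧ IsCoupling π' μ ν}, wCost (dAlphaQ dist (1/q) q) q π')
        ≤ ENNReal.ofReal ε' :=
      le_trans (iInf₂_le π ⟨hπprob, hcoupling⟩) hcost
    show wDist (dAlphaQ dist (1/q) q) q μ ν < ε
    unfold wDist
    have h1 : (⨅ π' ∈ {π' : Measure (Y × Y) |
        IsProbabilityMeasure π' ∧ IsCoupling π' μ ν}, wCost (dAlphaQ dist (1/q) q) q π')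
        ^ (1/q) ≤ ENNReal.ofReal (ε/2) := by
      have heq : ε' ^ (1/q) = ε/2 := by
        rw [hε'def, ← Real.rpow_mul (by linarith : (0:ℝ) ≤ ε/2),
          mul_one_div_cancel hqne, Real.rpow_one]
      calc _ ≤ (ENNReal.ofReal ε') ^ (1/q) := ENNReal.rpow_le_rpow hI (by positivity)
      _ = ENNReal.ofReal (ε' ^ (1/q)) :=
          ENNReal.ofReal_rpow_of_nonneg (le_of_lt hε') (by positivity)
      _ = ENNReal.ofReal (ε/2) := by rw [heq]
    exact lt_of_le_of_lt (ENNReal.toReal_le_of_le_ofReal (by linarith) h1) (by linarith)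
end
end

section
/- Let (X, d_X) be a complete and separable metric space, α ∈ (0,1), q ≥ 1, and set Y = [0,1]×X with metric d_{α,q}. Let ỹ, ỹ' ∈ Y with ỹ ≠ ỹ' and [ỹ, ỹ'] = {ỹ, ỹ'}, let η ∈ 𝒲_1(Y, d_{α,q}) with η ≠ δ_{ỹ}, let c ∈ (0,1), and set r = d_{𝒲_1}(δ_{ỹ}, η) and v = c·d_{α,q}(ỹ, ỹ'). Define γ̃ on [−(r/v)(1−c), 1] by γ̃(s) = (sv/(r(c−1)))δ_{ỹ} + (1 − sv/(r(c−1)))(cδ_{ỹ} + (1−c)η) for −(r/v)(1−c) ≤ s ≤ 0, and γ̃(s) = (1−c)η + c((1−s)δ_{ỹ} + sδ_{ỹ'}) for 0 < s ≤ 1. Then γ̃ is a geodesic of speed v: d_{𝒲_1}(γ̃(s_1), γ̃(s_2)) = v(s_2 − s_1) for all s_1 ≤ s_2 in [−(r/v)(1−c), 1]. -/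
open MeasureTheory
open scoped ENNReal NNReal

noncomputable section

section Aux

variable {Z : Type*} [MeasurableSpace Z]

lemma wCost_one (d : Z → Z → ℝ) (π : Measure (Z × Z)) :
    wCost d 1 π = ∫⁻ zz, ENNReal.ofReal (d zz.1 zz.2) ∂π := by
  simp [wCost]

lemma wDist_eq_of (d : Z → Z → ℝ) (μ ν : Measure Z) (K : ℝ) (hK : 0 ≤ K)
    (π₀ : Measure (Z × Z)) (h₀p : IsProbabilityMeasure π₀) (h₀c : IsCoupling π₀ μ ν)
    (hub : wCost d 1 π₀ ≤ ENNReal.ofReal K)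
    (hlb : ∀ π : Measure (Z × Z), IsProbabilityMeasure π → IsCoupling π μ ν →
      ENNReal.ofReal K ≤ wCost d 1 π) :
    wDist d 1 μ ν = K := by
  have h : (⨅ π ∈ {π : Measure (Z × Z) | IsProbabilityMeasure π ∧ IsCoupling π μ ν}, wCost d 1 π)
      = ENNReal.ofReal K :=
    le_antisymm (iInf₂_le_of_le π₀ ⟨h₀p, h₀c⟩ hub) (le_iInf₂ fun π hπ => hlb π hπ.1 hπ.2)
  rw [wDist, h]
  simp [ENNReal.toReal_ofReal hK]

/-- Kantorovich-type lower bound via a Lipschitz witness, second-marginal version. -/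
lemma lintegral_le_wCost_add (d : Z → Z → ℝ) (f : Z → ℝ)
    (hfm : Measurable f) (hlip : ∀ a b : Z, f b - f a ≤ d a b)
    (π : Measure (Z × Z)) (μ ν : Measure Z)
    (h1 : π.map Prod.fst = μ) (h2 : π.map Prod.snd = ν) :
    (∫⁻ z, ENNReal.ofReal (f z) ∂ν) ≤ wCost d 1 π + ∫⁻ z, ENNReal.ofReal (f z) ∂μ := by
  set g : Z → ℝ≥0∞ := fun z => ENNReal.ofReal (f z) with hg
  have hgm : Measurable g := ENNReal.measurable_ofReal.comp hfm
  have key : ∀ zz : Z × Z, g zz.2 ≤ ENNReal.ofReal (d zz.1 zz.2) + g zz.1 := by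
    intro zz
    have : f zz.2 ≤ d zz.1 zz.2 + f zz.1 := by linarith [hlip zz.1 zz.2]
    calc g zz.2 ≤ ENNReal.ofReal (d zz.1 zz.2 + f zz.1) := ENNReal.ofReal_le_ofReal this
    _ ≤ ENNReal.ofReal (d zz.1 zz.2) + g zz.1 := ENNReal.ofReal_add_le
  calc (∫⁻ z, g z ∂ν) = ∫⁻ zz : Z × Z, g zz.2 ∂π := by
        rw [← h2, lintegral_map hgm measurable_snd]
    _ ≤ ∫⁻ zz : Z × Z, (ENNReal.ofReal (d zz.1 zz.2) + g zz.1) ∂π := lintegral_mono key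
    _ ≤ (∫⁻ zz : Z × Z, ENNReal.ofReal (d zz.1 zz.2) ∂π) + ∫⁻ zz : Z × Z, g zz.1 ∂π :=
        le_of_eq (lintegral_add_right _ (hgm.comp measurable_fst))
    _ = wCost d 1 π + ∫⁻ z, g z ∂μ := by
        rw [wCost_one, ← h1, lintegral_map hgm measurable_fst]

/-- Kantorovich-type lower bound via a Lipschitz witness, first-marginal version. -/
lemma lintegral_le_wCost_add' (d : Z → Z → ℝ) (f : Z → ℝ)
    (hfm : Measurable f) (hlip : ∀ a b : Z, f a - f b ≤ d a b)
    (π : Measure (Z × Z)) (μ ν : Measure Z)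
    (h1 : π.map Prod.fst = μ) (h2 : π.map Prod.snd = ν) :
    (∫⁻ z, ENNReal.ofReal (f z) ∂μ) ≤ wCost d 1 π + ∫⁻ z, ENNReal.ofReal (f z) ∂ν := by
  set g : Z → ℝ≥0∞ := fun z => ENNReal.ofReal (f z) with hg
  have hgm : Measurable g := ENNReal.measurable_ofReal.comp hfm
  have key : ∀ zz : Z × Z, g zz.1 ≤ ENNReal.ofReal (d zz.1 zz.2) + g zz.2 := by
    intro zz
    have : f zz.1 ≤ d zz.1 zz.2 + f zz.2 := by linarith [hlip zz.1 zz.2]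
    calc g zz.1 ≤ ENNReal.ofReal (d zz.1 zz.2 + f zz.2) := ENNReal.ofReal_le_ofReal this
    _ ≤ ENNReal.ofReal (d zz.1 zz.2) + g zz.2 := ENNReal.ofReal_add_le
  calc (∫⁻ z, g z ∂μ) = ∫⁻ zz : Z × Z, g zz.1 ∂π := by
        rw [← h1, lintegral_map hgm measurable_fst]
    _ ≤ ∫⁻ zz : Z × Z, (ENNReal.ofReal (d zz.1 zz.2) + g zz.2) ∂π := lintegral_mono key
    _ ≤ (∫⁻ zz : Z × Z, ENNReal.ofReal (d zz.1 zz.2) ∂π) + ∫⁻ zz : Z × Z, g zz.2 ∂π :=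
        le_of_eq (lintegral_add_right _ (hgm.comp measurable_snd))
    _ = wCost d 1 π + ∫⁻ z, g z ∂ν := by
        rw [wCost_one, ← h2, lintegral_map hgm measurable_snd]

lemma eq_dirac_of_ae (μ : Measure Z) [IsProbabilityMeasure μ] (a : Z)
    (h : ∀ᵐ z ∂μ, z = a) : μ = Measure.dirac a := by
  ext s hs
  rw [Measure.dirac_apply' a hs]
  by_cases has : a ∈ s
  · have h0 : μ sᶜ = 0 := by
      refine measure_mono_null (fun z hz => ?_) h
      exact fun (hza : z = a) => hz (hza ▸ has)
    have h1 : μ s = 1 := by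
      have := measure_add_measure_compl (μ := μ) hs
      rw [h0, add_zero] at this
      simpa using this
    simp [h1, has]
  · have h0 : μ s = 0 := by
      refine measure_mono_null (fun z hz => ?_) h
      exact fun (hza : z = a) => has (hza ▸ hz)
    simp [h0, has]

end Aux

section Metric

variable {X : Type*} [MetricSpace X] {α q : ℝ}

lemma real_rpow_add_le {x y : ℝ} (hx : 0 ≤ x) (hy : 0 ≤ y) (h0 : 0 ≤ α) (h1 : α ≤ 1) :
    (x + y) ^ α ≤ x ^ α + y ^ α := by
  lift x to ℝ≥0 using hx
  lift y to ℝ≥0 using hy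
  have := NNReal.rpow_add_le_add_rpow x y h0 h1
  exact_mod_cast this

lemma minkowski_pair (hq : 1 ≤ q) {a b c d : ℝ} (ha : 0 ≤ a) (hb : 0 ≤ b) (hc : 0 ≤ c)
    (hd : 0 ≤ d) :
    ((a + c) ^ q + (b + d) ^ q) ^ (1 / q)
      ≤ (a ^ q + b ^ q) ^ (1 / q) + (c ^ q + d ^ q) ^ (1 / q) := by
  have h := Real.Lp_add_le (Finset.univ : Finset (Fin 2)) ![a, b] ![c, d] hq
  simp only [Fin.sum_univ_two, Matrix.cons_val_zero, Matrix.cons_val_one, Matrix.head_cons,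
    Pi.add_apply] at h
  rwa [abs_of_nonneg (by positivity), abs_of_nonneg (by positivity), abs_of_nonneg ha,
    abs_of_nonneg hb, abs_of_nonneg hc, abs_of_nonneg hd] at h

lemma dq_eq (y y' : Set.Icc (0:ℝ) 1 × X) :
    dAlphaQ dist α q y y'
      = ((|(y.1 : ℝ) - (y'.1 : ℝ)| ^ α) ^ q + dist y.2 y'.2 ^ q) ^ (1 / q) := by
  rw [dAlphaQ, ← Real.rpow_mul (abs_nonneg _)]

lemma dq_nonneg (y y' : Set.Icc (0:ℝ) 1 × X) : 0 ≤ dAlphaQ dist α q y y' :=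
  Real.rpow_nonneg
    (add_nonneg (Real.rpow_nonneg (abs_nonneg _) _) (Real.rpow_nonneg dist_nonneg _)) _

lemma dq_self (hα : 0 < α) (hq : 1 ≤ q) (y : Set.Icc (0:ℝ) 1 × X) :
    dAlphaQ dist α q y y = 0 := by
  have hq0 : q ≠ 0 := by positivity
  have hαq : α * q ≠ 0 := by positivity
  simp [dAlphaQ, sub_self, abs_zero, Real.zero_rpow hαq, Real.zero_rpow hq0,
    Real.zero_rpow (one_div_ne_zero hq0), Real.zero_rpow (inv_ne_zero hq0)]

lemma dq_symm (y y' : Set.Icc (0:ℝ) 1 × X) :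
    dAlphaQ dist α q y y' = dAlphaQ dist α q y' y := by
  rw [dAlphaQ, dAlphaQ, abs_sub_comm, dist_comm]

lemma dq_eq_zero (hα : 0 < α) (hq : 1 ≤ q) {y y' : Set.Icc (0:ℝ) 1 × X}
    (h : dAlphaQ dist α q y y' = 0) : y = y' := by
  have hsum : |(y.1 : ℝ) - (y'.1 : ℝ)| ^ (α * q) + dist y.2 y'.2 ^ q = 0 := by
    have h0 := (Real.rpow_eq_zero_iff_of_nonneg
      (add_nonneg (Real.rpow_nonneg (abs_nonneg _) _) (Real.rpow_nonneg dist_nonneg _))).mp h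
    exact h0.1
  have h1 : |(y.1 : ℝ) - (y'.1 : ℝ)| ^ (α * q) = 0 := by
    have := Real.rpow_nonneg (abs_nonneg ((y.1 : ℝ) - (y'.1 : ℝ))) (α * q)
    have := Real.rpow_nonneg (dist_nonneg (x := y.2) (y := y'.2)) q
    linarith
  have h2 : dist y.2 y'.2 ^ q = 0 := by
    have := Real.rpow_nonneg (abs_nonneg ((y.1 : ℝ) - (y'.1 : ℝ))) (α * q)
    linarith
  have ht : (y.1 : ℝ) = y'.1 := by
    have h3 := (Real.rpow_eq_zero_iff_of_nonneg (abs_nonneg _)).mp h1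
    have := abs_eq_zero.mp h3.1
    linarith
  have hx : y.2 = y'.2 := by
    have h4 := (Real.rpow_eq_zero_iff_of_nonneg dist_nonneg).mp h2
    exact dist_eq_zero.mp h4.1
  exact Prod.ext (Subtype.ext ht) hx

lemma dq_triangle (hα : 0 < α) (hα1 : α ≤ 1) (hq : 1 ≤ q) (a b c : Set.Icc (0:ℝ) 1 × X) :
    dAlphaQ dist α q a c ≤ dAlphaQ dist α q a b + dAlphaQ dist α q b c := by
  have hq0 : 0 < q := lt_of_lt_of_le one_pos hq
  rw [dq_eq, dq_eq, dq_eq]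
  set A := |(a.1 : ℝ) - (b.1 : ℝ)| ^ α with hA
  set B := dist a.2 b.2 with hB
  set C := |(b.1 : ℝ) - (c.1 : ℝ)| ^ α with hC
  set D := dist b.2 c.2 with hD
  have hA0 : 0 ≤ A := Real.rpow_nonneg (abs_nonneg _) _
  have hB0 : 0 ≤ B := dist_nonneg
  have hC0 : 0 ≤ C := Real.rpow_nonneg (abs_nonneg _) _
  have hD0 : 0 ≤ D := dist_nonneg
  have h1 : |(a.1 : ℝ) - (c.1 : ℝ)| ^ α ≤ A + C := by
    calc |(a.1 : ℝ) - (c.1 : ℝ)| ^ α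
        ≤ (|(a.1 : ℝ) - (b.1 : ℝ)| + |(b.1 : ℝ) - (c.1 : ℝ)|) ^ α :=
          Real.rpow_le_rpow (abs_nonneg _) (abs_sub_le _ _ _) hα.le
      _ ≤ A + C := real_rpow_add_le (abs_nonneg _) (abs_nonneg _) hα.le hα1
  have h2 : dist a.2 c.2 ≤ B + D := dist_triangle _ _ _
  calc ((|(a.1 : ℝ) - (c.1 : ℝ)| ^ α) ^ q + dist a.2 c.2 ^ q) ^ (1 / q)
      ≤ ((A + C) ^ q + (B + D) ^ q) ^ (1 / q) := by
        apply Real.rpow_le_rpow (by positivity)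
          (add_le_add (Real.rpow_le_rpow (Real.rpow_nonneg (abs_nonneg _) _) h1 hq0.le)
            (Real.rpow_le_rpow dist_nonneg h2 hq0.le)) (by positivity)
    _ ≤ (A ^ q + B ^ q) ^ (1 / q) + (C ^ q + D ^ q) ^ (1 / q) :=
        minkowski_pair hq hA0 hB0 hC0 hD0

lemma dq_continuous (hα : 0 < α) (hq : 1 ≤ q) :
    Continuous (fun p : (Set.Icc (0:ℝ) 1 × X) × (Set.Icc (0:ℝ) 1 × X) =>
      dAlphaQ dist α q p.1 p.2) := by
  have hq0 : 0 < q := lt_of_lt_of_le one_pos hq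
  have hαq : (0:ℝ) ≤ α * q := by positivity
  apply (Real.continuous_rpow_const (by positivity : (0:ℝ) ≤ 1 / q)).comp
  apply Continuous.add
  · exact (Real.continuous_rpow_const hαq).comp
      ((continuous_subtype_val.comp (continuous_fst.comp continuous_fst)).sub
        (continuous_subtype_val.comp (continuous_fst.comp continuous_snd))).abs
  · exact (Real.continuous_rpow_const hq0.le).comp
      (Continuous.dist (continuous_snd.comp continuous_fst) (continuous_snd.comp continuous_snd))

end Metric

set_option maxHeartbeats 2000000 in
/-- The extended curve `γ̃` built from `μ = (1-c)η + cδ_{ỹ}` and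
`ν = (1-c)η + cδ_{ỹ'}` (with `[ỹ,ỹ'] = {ỹ,ỹ'}`, `η ≠ δ_{ỹ}`, `c ∈ (0,1)`), defined on
`[-(r/v)(1-c), 1]`, is a geodesic of speed `v = c·d_{α,q}(ỹ,ỹ')` in the 1-Wasserstein
space, where `r = d_{W₁}(δ_{ỹ}, η)`. -/
theorem extended_geodesic
    {X : Type*} [MetricSpace X] [CompleteSpace X] [TopologicalSpace.SeparableSpace X]
    [MeasurableSpace X] [BorelSpace X]
    (α q : ℝ) (hα : α ∈ Set.Ioo (0:ℝ) 1) (hq : 1 ≤ q)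
    (yt yt' : Set.Icc (0:ℝ) 1 × X) (hne : yt ≠ yt')
    (hseg : mSeg (dAlphaQ dist α q) yt yt' = {yt, yt'})
    (η : Measure (Set.Icc (0:ℝ) 1 × X)) (hη : memW (dAlphaQ dist α q) 1 η)
    (hηne : η ≠ Measure.dirac yt)
    (c : ℝ) (hc : c ∈ Set.Ioo (0:ℝ) 1) :
    let d : (Set.Icc (0:ℝ) 1 × X) → (Set.Icc (0:ℝ) 1 × X) → ℝ := dAlphaQ dist α q
    let r : ℝ := wDist d 1 (Measure.dirac yt) η
    let v : ℝ := c * d yt yt'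
    let γ : ℝ → Measure (Set.Icc (0:ℝ) 1 × X) := fun s =>
      if s ≤ 0 then
        ENNReal.ofReal (s * v / (r * (c - 1))) • Measure.dirac yt
          + ENNReal.ofReal (1 - s * v / (r * (c - 1))) •
              (ENNReal.ofReal c • Measure.dirac yt + ENNReal.ofReal (1 - c) • η)
      else
        ENNReal.ofReal (1 - c) • η + ENNReal.ofReal c •
          (ENNReal.ofReal (1 - s) • Measure.dirac yt + ENNReal.ofReal s • Measure.dirac yt')
    ∀ s₁ s₂ : ℝ, -((r / v) * (1 - c)) ≤ s₁ → s₁ ≤ s₂ → s₂ ≤ 1 →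
      wDist d 1 (γ s₁) (γ s₂) = v * (s₂ - s₁) := by
  intro d r v γ s₁ s₂ hs₁l hs₁₂ hs₂u
  clear hseg
  have hd_eq : d = dAlphaQ dist α q := rfl
  have hv_eq : v = c * d yt yt' := rfl
  have hr_def : r = wDist d 1 (Measure.dirac yt) η := rfl
  rw [← hd_eq] at hη
  obtain ⟨hα0, hα1⟩ := hα
  obtain ⟨hc0, hc1⟩ := hc
  have hprobη : IsProbabilityMeasure η := hη.1
  -- basic facts about `d`
  have hd0 : ∀ y y' : (Set.Icc (0:ℝ) 1 × X), 0 ≤ d y y' := by rw [hd_eq]; exact fun y y' => dq_nonneg y y'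
  have hdself : ∀ y : (Set.Icc (0:ℝ) 1 × X), d y y = 0 := by rw [hd_eq]; exact fun y => dq_self hα0 hq y
  have hdsymm : ∀ y y' : (Set.Icc (0:ℝ) 1 × X), d y y' = d y' y := by rw [hd_eq]; exact fun y y' => dq_symm y y'
  have hdtri : ∀ a b e : (Set.Icc (0:ℝ) 1 × X), d a e ≤ d a b + d b e := by
    rw [hd_eq]; exact fun a b e => dq_triangle hα0 hα1.le hq a b e
  have hdzero : ∀ y y' : (Set.Icc (0:ℝ) 1 × X), d y y' = 0 → y = y' := by
    rw [hd_eq]; exact fun y y' h => dq_eq_zero hα0 hq h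
  have Fm : Measurable (fun zz : ((Set.Icc (0:ℝ) 1 × X) × (Set.Icc (0:ℝ) 1 × X)) => ENNReal.ofReal (d zz.1 zz.2)) := by
    rw [hd_eq]
    exact ENNReal.measurable_ofReal.comp (dq_continuous hα0 hq).measurable
  have fm : Measurable (fun z : (Set.Icc (0:ℝ) 1 × X) => d yt z) := by
    rw [hd_eq]
    exact ((dq_continuous hα0 hq).comp (continuous_const.prodMk continuous_id)).measurable
  have f'm : Measurable (fun z : (Set.Icc (0:ℝ) 1 × X) => d z yt') := by
    rw [hd_eq]
    exact ((dq_continuous hα0 hq).comp (continuous_id.prodMk continuous_const)).measurable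
  have gm : Measurable (fun z : (Set.Icc (0:ℝ) 1 × X) => ENNReal.ofReal (d yt z)) :=
    ENNReal.measurable_ofReal.comp fm
  have g'm : Measurable (fun z : (Set.Icc (0:ℝ) 1 × X) => ENNReal.ofReal (d z yt')) :=
    ENNReal.measurable_ofReal.comp f'm
  -- positivity of `D` and `v`
  set D : ℝ := d yt yt' with hDdef
  have hvD : v = c * D := hv_eq
  have hD : 0 < D := by
    rcases lt_or_eq_of_le (hd0 yt yt') with h | h
    · exact h
    · exact absurd (hdzero yt yt' h.symm) hne
  have hv : 0 < v := mul_pos hc0 hD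
  -- the first moment `G`
  set G : ℝ≥0∞ := ∫⁻ z, ENNReal.ofReal (d yt z) ∂η with hGdef
  have hGfin : G ≠ ⊤ := by
    obtain ⟨z0, hz0⟩ := hη.2
    have hz0' : (∫⁻ z, ENNReal.ofReal (d z z0) ∂η) ≠ ⊤ := by
      have he : (fun z : (Set.Icc (0:ℝ) 1 × X) => ENNReal.ofReal (d z z0 ^ (1:ℝ)))
          = fun z : (Set.Icc (0:ℝ) 1 × X) => ENNReal.ofReal (d z z0) := by
        funext z; rw [Real.rpow_one]
      rwa [he] at hz0
    have hle : G ≤ ENNReal.ofReal (d yt z0) + ∫⁻ z, ENNReal.ofReal (d z z0) ∂η := by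
      have hpt : ∀ z, ENNReal.ofReal (d yt z)
          ≤ ENNReal.ofReal (d yt z0) + ENNReal.ofReal (d z z0) := by
        intro z
        have hzz : d yt z ≤ d yt z0 + d z z0 := by
          calc d yt z ≤ d yt z0 + d z0 z := hdtri yt z0 z
          _ = d yt z0 + d z z0 := by rw [hdsymm z0 z]
        calc ENNReal.ofReal (d yt z) ≤ ENNReal.ofReal (d yt z0 + d z z0) :=
              ENNReal.ofReal_le_ofReal hzz
        _ ≤ ENNReal.ofReal (d yt z0) + ENNReal.ofReal (d z z0) := ENNReal.ofReal_add_le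
      calc G ≤ ∫⁻ z, (ENNReal.ofReal (d yt z0) + ENNReal.ofReal (d z z0)) ∂η :=
            lintegral_mono hpt
      _ = (∫⁻ _z, ENNReal.ofReal (d yt z0) ∂η) + ∫⁻ z, ENNReal.ofReal (d z z0) ∂η :=
            lintegral_add_left measurable_const _
      _ = ENNReal.ofReal (d yt z0) + ∫⁻ z, ENNReal.ofReal (d z z0) ∂η := by
            rw [lintegral_const, measure_univ, mul_one]
    exact ne_top_of_le_ne_top (ENNReal.add_ne_top.mpr ⟨ENNReal.ofReal_ne_top, hz0'⟩) hle
  have hlip_g : ∀ a b : (Set.Icc (0:ℝ) 1 × X), d yt b - d yt a ≤ d a b := by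
    intro a b
    have := hdtri yt a b
    linarith
  have hlip_g' : ∀ a b : (Set.Icc (0:ℝ) 1 × X), d a yt' - d b yt' ≤ d a b := by
    intro a b
    have := hdtri a b yt'
    linarith
  -- `r = G.toReal`
  have r_eq : r = G.toReal := by
    rw [hr_def]
    apply wDist_eq_of d (Measure.dirac yt) η G.toReal ENNReal.toReal_nonneg
      ((Measure.dirac yt).prod η)
    · infer_instance
    · constructor
      · rw [Measure.map_fst_prod]; simp
      · rw [Measure.map_snd_prod]; simp
    · rw [wCost_one, Measure.dirac_prod, lintegral_map Fm measurable_prodMk_left,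
        ENNReal.ofReal_toReal hGfin]
    · intro π hπp hπc
      have h := lintegral_le_wCost_add d (fun z => d yt z) fm hlip_g π
        (Measure.dirac yt) η hπc.1 hπc.2
      rw [lintegral_dirac' _ gm] at h
      rw [hdself yt] at h
      simp only [ENNReal.ofReal_zero, add_zero] at h
      rwa [ENNReal.ofReal_toReal hGfin]
  have hofr : ENNReal.ofReal r = G := by rw [r_eq, ENNReal.ofReal_toReal hGfin]
  have hr0 : 0 < r := by
    rcases lt_or_eq_of_le (r_eq ▸ ENNReal.toReal_nonneg : (0:ℝ) ≤ r) with h | h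
    · exact h
    have hG0 : G = 0 := by rw [← hofr, ← h]; simp
    have hae0 := (lintegral_eq_zero_iff gm).mp hG0
    have hae : ∀ᵐ z ∂η, z = yt := by
      refine hae0.mono fun z hz => ?_
      have h1 : ENNReal.ofReal (d yt z) = 0 := hz
      have h2 : d yt z ≤ 0 := ENNReal.ofReal_eq_zero.mp h1
      have h3 : d yt z = 0 := le_antisymm h2 (hd0 yt z)
      exact (dq_eq_zero hα0 hq h3).symm
    exact absurd (eq_dirac_of_ae η yt hae) hηne
  -- the weight function β
  set β : ℝ → ℝ := fun s => (1 - c) + s * v / r with hβdef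
  have hβr : ∀ s, β s * r = (1 - c) * r + s * v := by
    intro s
    rw [hβdef]
    field_simp
  have hβ0 : ∀ s, -(r / v * (1 - c)) ≤ s → 0 ≤ β s := by
    intro s hs
    have h1 : -(r / v * (1 - c)) * v = -(r * (1 - c)) := by field_simp
    have h3 := mul_le_mul_of_nonneg_right hs hv.le
    rw [h1] at h3
    have h4 : 0 ≤ β s * r := by rw [hβr s]; linarith
    nlinarith
  have hβle : ∀ s, s ≤ 0 → β s ≤ 1 - c := by
    intro s hs
    have h4 : s * v ≤ 0 := mul_nonpos_iff.mpr (Or.inr ⟨hs, hv.le⟩)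
    have h5 : s * v / r ≤ 0 := div_nonpos_iff.mpr (Or.inr ⟨h4, hr0.le⟩)
    rw [hβdef]
    simp only
    linarith
  have hβmono : β s₁ ≤ β s₂ := by
    rw [hβdef]
    simp only
    have h2 : s₁ * v / r ≤ s₂ * v / r := by
      rw [div_le_div_iff₀ hr0 hr0]
      exact mul_le_mul_of_nonneg_right (mul_le_mul_of_nonneg_right hs₁₂ hv.le) hr0.le
    linarith
  -- normalized forms of γ
  have hγL : ∀ s, -(r / v * (1 - c)) ≤ s → s ≤ 0 →
      γ s = ENNReal.ofReal (1 - β s) • Measure.dirac yt + ENNReal.ofReal (β s) • η := by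
    intro s hsl hsu
    have hstep : γ s = ENNReal.ofReal (s * v / (r * (c - 1))) • Measure.dirac yt
        + ENNReal.ofReal (1 - s * v / (r * (c - 1))) •
            (ENNReal.ofReal c • Measure.dirac yt + ENNReal.ofReal (1 - c) • η) := by
      show (if s ≤ 0 then _ else _) = _
      rw [if_pos hsu]
    rw [hstep]
    set a : ℝ := s * v / (r * (c - 1)) with hadef
    have ha' : a = -(s * v) / (r * (1 - c)) := by
      rw [hadef, ← neg_div_neg_eq]
      congr 1
      ring
    have ha0 : 0 ≤ a := by
      rw [ha']
      apply div_nonneg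
      · have : s * v ≤ 0 := mul_nonpos_iff.mpr (Or.inr ⟨hsu, hv.le⟩)
        linarith
      · nlinarith
    have ha1 : a ≤ 1 := by
      rw [ha']
      rw [div_le_one (by nlinarith)]
      have h1 : -(r / v * (1 - c)) * v = -(r * (1 - c)) := by field_simp
      have h3 := mul_le_mul_of_nonneg_right hsl hv.le
      rw [h1] at h3
      linarith
    have key : ENNReal.ofReal a • Measure.dirac yt
        + ENNReal.ofReal (1 - a) •
            (ENNReal.ofReal c • Measure.dirac yt + ENNReal.ofReal (1 - c) • η)
        = ENNReal.ofReal (a + (1 - a) * c) • Measure.dirac yt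
            + ENNReal.ofReal ((1 - a) * (1 - c)) • η := by
      rw [smul_add, smul_smul, smul_smul,
        ← ENNReal.ofReal_mul (by linarith : (0:ℝ) ≤ 1 - a),
        ← ENNReal.ofReal_mul (by linarith : (0:ℝ) ≤ 1 - a),
        ← add_assoc, ← add_smul,
        ← ENNReal.ofReal_add ha0 (mul_nonneg (by linarith) hc0.le)]
    rw [key]
    have hrne : r ≠ 0 := hr0.ne'
    have hcne : c - 1 ≠ 0 := by linarith
    have haa : a * (1 - c) = -(s * v / r) := by
      rw [hadef]
      field_simp
      ring
    have e2 : (1 - a) * (1 - c) = β s := by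
      rw [hβdef]
      simp only
      nlinarith [haa]
    have e1 : a + (1 - a) * c = 1 - β s := by
      rw [← e2]; ring
    rw [e1, e2]
  have hγR : ∀ s, 0 < s →
      γ s = ENNReal.ofReal (1 - c) • η + ENNReal.ofReal (c * (1 - s)) • Measure.dirac yt
        + ENNReal.ofReal (c * s) • Measure.dirac yt' := by
    intro s hs
    have hstep : γ s = ENNReal.ofReal (1 - c) • η + ENNReal.ofReal c •
        (ENNReal.ofReal (1 - s) • Measure.dirac yt + ENNReal.ofReal s • Measure.dirac yt') := by
      show (if s ≤ 0 then _ else _) = _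
      rw [if_neg (not_le.mpr hs)]
    rw [hstep, smul_add, smul_smul, smul_smul, ← ENNReal.ofReal_mul hc0.le,
      ← ENNReal.ofReal_mul hc0.le, ← add_assoc]
  -- diagonal map and standard couplings
  set Δ : (Set.Icc (0:ℝ) 1 × X) → ((Set.Icc (0:ℝ) 1 × X) × (Set.Icc (0:ℝ) 1 × X)) := fun z => (z, z) with hΔdef
  have hΔ : Measurable Δ := measurable_id.prodMk measurable_id
  haveI : IsProbabilityMeasure (η.map Δ) := Measure.isProbabilityMeasure_map hΔ.aemeasurable
  have cost_diag : (∫⁻ zz : ((Set.Icc (0:ℝ) 1 × X) × (Set.Icc (0:ℝ) 1 × X)), ENNReal.ofReal (d zz.1 zz.2) ∂(η.map Δ)) = 0 := by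
    rw [lintegral_map Fm hΔ]
    simp [hΔdef, hdself]
  have cost_prod : (∫⁻ zz : ((Set.Icc (0:ℝ) 1 × X) × (Set.Icc (0:ℝ) 1 × X)), ENNReal.ofReal (d zz.1 zz.2) ∂((Measure.dirac yt).prod η))
      = G := by
    rw [Measure.dirac_prod, lintegral_map Fm measurable_prodMk_left]
  have marg_diag_fst : (η.map Δ).map Prod.fst = η := by
    rw [Measure.map_map measurable_fst hΔ]
    have : (Prod.fst ∘ Δ) = id := rfl
    rw [this, Measure.map_id]
  have marg_diag_snd : (η.map Δ).map Prod.snd = η := by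
    rw [Measure.map_map measurable_snd hΔ]
    have : (Prod.snd ∘ Δ) = id := rfl
    rw [this, Measure.map_id]
  have marg_prod_fst : ((Measure.dirac yt).prod η).map Prod.fst = Measure.dirac yt := by
    rw [Measure.map_fst_prod]; simp
  have marg_prod_snd : ((Measure.dirac yt).prod η).map Prod.snd = η := by
    rw [Measure.map_snd_prod]; simp
  have hK : 0 ≤ v * (s₂ - s₁) := mul_nonneg hv.le (by linarith)
  -- integral of g against the left-form measures
  have lintL : ∀ s, 0 ≤ β s → β s ≤ 1 →
      (∫⁻ z, ENNReal.ofReal (d yt z)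
          ∂(ENNReal.ofReal (1 - β s) • Measure.dirac yt + ENNReal.ofReal (β s) • η))
        = ENNReal.ofReal (β s * r) := by
    intro s h0 h1
    rw [lintegral_add_measure, lintegral_smul_measure, lintegral_smul_measure,
      lintegral_dirac' _ gm]
    rw [hdself yt]
    simp only [smul_eq_mul, ENNReal.ofReal_zero, mul_zero, zero_add]
    rw [← hGdef, ← hofr, ← ENNReal.ofReal_mul h0]
  -- case split
  rcases le_or_gt s₂ 0 with h2 | h2
  · -- Case 1 : s₁ ≤ s₂ ≤ 0
    have h1 : s₁ ≤ 0 := le_trans hs₁₂ h2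
    have hs₂l : -(r / v * (1 - c)) ≤ s₂ := le_trans hs₁l hs₁₂
    have hγ1 := hγL s₁ hs₁l h1
    have hγ2 := hγL s₂ hs₂l h2
    have hβ10 : 0 ≤ β s₁ := hβ0 s₁ hs₁l
    have hβ20 : 0 ≤ β s₂ := hβ0 s₂ hs₂l
    have hβ1le : β s₁ ≤ 1 - c := hβle s₁ h1
    have hβ2le : β s₂ ≤ 1 - c := hβle s₂ h2
    have hKr : v * (s₂ - s₁) + β s₁ * r = β s₂ * r := by
      have e1 := hβr s₁
      have e2 := hβr s₂
      linarith
    set π₀ : Measure (((Set.Icc (0:ℝ) 1 × X) × (Set.Icc (0:ℝ) 1 × X))) :=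
      ENNReal.ofReal (1 - β s₂) • Measure.dirac (yt, yt) + ENNReal.ofReal (β s₁) • η.map Δ
        + ENNReal.ofReal (β s₂ - β s₁) • ((Measure.dirac yt).prod η) with hπ₀
    have hπp : IsProbabilityMeasure π₀ := by
      constructor
      rw [hπ₀]
      simp only [Measure.add_apply, Measure.smul_apply, measure_univ, smul_eq_mul, mul_one]
      rw [← ENNReal.ofReal_add (by linarith) (by linarith),
        ← ENNReal.ofReal_add (by linarith) (by linarith)]
      norm_num
    have hπc : IsCoupling π₀ (γ s₁) (γ s₂) := by
      constructor
      · rw [hπ₀, Measure.map_add _ _ measurable_fst, Measure.map_add _ _ measurable_fst,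
          Measure.map_smul, Measure.map_smul, Measure.map_smul,
          Measure.map_dirac' measurable_fst, marg_diag_fst, marg_prod_fst, hγ1]
        have hre : ENNReal.ofReal (1 - β s₂) • Measure.dirac yt
            + ENNReal.ofReal (β s₁) • η
            + ENNReal.ofReal (β s₂ - β s₁) • Measure.dirac yt
            = (ENNReal.ofReal (1 - β s₂) + ENNReal.ofReal (β s₂ - β s₁)) • Measure.dirac yt
              + ENNReal.ofReal (β s₁) • η := by
          rw [add_smul]; abel
        rw [hre, ← ENNReal.ofReal_add (by linarith) (by linarith)]
        have : (1 - β s₂) + (β s₂ - β s₁) = 1 - β s₁ := by ring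
        rw [this]
      · rw [hπ₀, Measure.map_add _ _ measurable_snd, Measure.map_add _ _ measurable_snd,
          Measure.map_smul, Measure.map_smul, Measure.map_smul,
          Measure.map_dirac' measurable_snd, marg_diag_snd, marg_prod_snd, hγ2]
        rw [add_assoc, ← add_smul, ← ENNReal.ofReal_add (by linarith) (by linarith)]
        have : β s₁ + (β s₂ - β s₁) = β s₂ := by ring
        rw [this]
    apply wDist_eq_of d _ _ (v * (s₂ - s₁)) hK π₀ hπp hπc
    · rw [wCost_one, hπ₀, lintegral_add_measure, lintegral_add_measure,
        lintegral_smul_measure, lintegral_smul_measure, lintegral_smul_measure,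
        lintegral_dirac' _ Fm, cost_diag, cost_prod]
      simp only [smul_eq_mul, hdself yt, ENNReal.ofReal_zero, mul_zero, zero_add, add_zero]
      rw [← hofr, ← ENNReal.ofReal_mul (by linarith)]
      apply le_of_eq
      congr 1
      linarith
    · intro π hπp' hπc'
      have h := lintegral_le_wCost_add d (fun z => d yt z) fm hlip_g π _ _ hπc'.1 hπc'.2
      rw [hγ1, hγ2, lintL s₁ hβ10 (by linarith), lintL s₂ hβ20 (by linarith)] at h
      have h' : ENNReal.ofReal (v * (s₂ - s₁)) + ENNReal.ofReal (β s₁ * r)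
          ≤ wCost d 1 π + ENNReal.ofReal (β s₁ * r) := by
        rw [← ENNReal.ofReal_add hK (mul_nonneg hβ10 hr0.le), hKr]
        exact h
      exact (ENNReal.add_le_add_iff_right ENNReal.ofReal_ne_top).mp h'
  · rcases le_or_gt s₁ 0 with h1 | h1
    · -- Case 3 : s₁ ≤ 0 < s₂
      have hγ1 := hγL s₁ hs₁l h1
      have hγ2 := hγR s₂ h2
      have hβ10 : 0 ≤ β s₁ := hβ0 s₁ hs₁l
      have hβ1le : β s₁ ≤ 1 - c := hβle s₁ h1
      set π₀ : Measure (((Set.Icc (0:ℝ) 1 × X) × (Set.Icc (0:ℝ) 1 × X))) :=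
        ENNReal.ofReal (β s₁) • η.map Δ
          + ENNReal.ofReal ((1 - c) - β s₁) • ((Measure.dirac yt).prod η)
          + ENNReal.ofReal (c * (1 - s₂)) • Measure.dirac (yt, yt)
          + ENNReal.ofReal (c * s₂) • Measure.dirac (yt, yt') with hπ₀
      have hc2 : 0 ≤ c * (1 - s₂) := mul_nonneg hc0.le (by linarith)
      have hc3 : 0 ≤ c * s₂ := mul_nonneg hc0.le h2.le
      have hπp : IsProbabilityMeasure π₀ := by
        constructor
        rw [hπ₀]
        simp only [Measure.add_apply, Measure.smul_apply, measure_univ, smul_eq_mul, mul_one]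
        rw [← ENNReal.ofReal_add (by linarith) (by linarith),
          ← ENNReal.ofReal_add (by linarith) hc2,
          ← ENNReal.ofReal_add (by linarith) hc3]
        rw [ENNReal.ofReal_eq_one]
        ring
      have hπc : IsCoupling π₀ (γ s₁) (γ s₂) := by
        constructor
        · rw [hπ₀, Measure.map_add _ _ measurable_fst, Measure.map_add _ _ measurable_fst,
            Measure.map_add _ _ measurable_fst,
            Measure.map_smul, Measure.map_smul, Measure.map_smul, Measure.map_smul,
            Measure.map_dirac' measurable_fst, Measure.map_dirac' measurable_fst,
            marg_diag_fst, marg_prod_fst, hγ1]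
          have hre : ENNReal.ofReal (β s₁) • η
              + ENNReal.ofReal ((1 - c) - β s₁) • Measure.dirac yt
              + ENNReal.ofReal (c * (1 - s₂)) • Measure.dirac yt
              + ENNReal.ofReal (c * s₂) • Measure.dirac yt
              = (ENNReal.ofReal ((1 - c) - β s₁) + ENNReal.ofReal (c * (1 - s₂))
                  + ENNReal.ofReal (c * s₂)) • Measure.dirac yt
                + ENNReal.ofReal (β s₁) • η := by
            rw [add_smul, add_smul]; abel
          rw [hre, ← ENNReal.ofReal_add (by linarith) hc2, ← ENNReal.ofReal_add (by linarith) hc3]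
          have : ((1 - c) - β s₁) + c * (1 - s₂) + c * s₂ = 1 - β s₁ := by ring
          rw [this]
        · rw [hπ₀, Measure.map_add _ _ measurable_snd, Measure.map_add _ _ measurable_snd,
            Measure.map_add _ _ measurable_snd,
            Measure.map_smul, Measure.map_smul, Measure.map_smul, Measure.map_smul,
            Measure.map_dirac' measurable_snd, Measure.map_dirac' measurable_snd,
            marg_diag_snd, marg_prod_snd, hγ2]
          rw [← add_smul, ← ENNReal.ofReal_add hβ10 (by linarith)]
          have : β s₁ + ((1 - c) - β s₁) = 1 - c := by ring
          rw [this]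
      apply wDist_eq_of d _ _ (v * (s₂ - s₁)) hK π₀ hπp hπc
      · rw [wCost_one, hπ₀, lintegral_add_measure, lintegral_add_measure, lintegral_add_measure,
          lintegral_smul_measure, lintegral_smul_measure, lintegral_smul_measure,
          lintegral_smul_measure, lintegral_dirac' _ Fm, lintegral_dirac' _ Fm,
          cost_diag, cost_prod]
        simp only [smul_eq_mul, hdself yt, ENNReal.ofReal_zero, mul_zero, zero_add, add_zero]
        rw [← hofr, ← ENNReal.ofReal_mul (by linarith), ← hDdef,
          ← ENNReal.ofReal_mul hc3, ← ENNReal.ofReal_add (by nlinarith) (by nlinarith)]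
        apply le_of_eq
        congr 1
        have e1 := hβr s₁
        nlinarith [hvD]
      · intro π hπp' hπc'
        have h := lintegral_le_wCost_add d (fun z => d yt z) fm hlip_g π _ _ hπc'.1 hπc'.2
        have I2 : (∫⁻ z, ENNReal.ofReal (d yt z) ∂(γ s₂))
            = ENNReal.ofReal ((1 - c) * r + c * s₂ * D) := by
          rw [hγ2, lintegral_add_measure, lintegral_add_measure,
            lintegral_smul_measure, lintegral_smul_measure, lintegral_smul_measure,
            lintegral_dirac' _ gm, lintegral_dirac' _ gm]
          rw [hdself yt]
          simp only [smul_eq_mul, ENNReal.ofReal_zero, mul_zero, add_zero]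
          rw [← hGdef, ← hofr, ← ENNReal.ofReal_mul (by linarith), ← hDdef,
            ← ENNReal.ofReal_mul hc3,
            ← ENNReal.ofReal_add (by nlinarith) (by nlinarith)]
        rw [hγ1, lintL s₁ hβ10 (by linarith), I2] at h
        have hKr : v * (s₂ - s₁) + β s₁ * r = (1 - c) * r + c * s₂ * D := by
          have e1 := hβr s₁
          nlinarith [hvD]
        have h' : ENNReal.ofReal (v * (s₂ - s₁)) + ENNReal.ofReal (β s₁ * r)
            ≤ wCost d 1 π + ENNReal.ofReal (β s₁ * r) := by
          rw [← ENNReal.ofReal_add hK (mul_nonneg hβ10 hr0.le), hKr]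
          exact h
        exact (ENNReal.add_le_add_iff_right ENNReal.ofReal_ne_top).mp h'
    · -- Case 2 : 0 < s₁ ≤ s₂ ≤ 1
      have hγ1 := hγR s₁ h1
      have hγ2 := hγR s₂ h2
      have hc1s1 : 0 ≤ c * (1 - s₁) := mul_nonneg hc0.le (by linarith)
      have hc1s2 : 0 ≤ c * (1 - s₂) := mul_nonneg hc0.le (by linarith)
      have hcs1 : 0 ≤ c * s₁ := mul_nonneg hc0.le h1.le
      have hcs2 : 0 ≤ c * s₂ := mul_nonneg hc0.le h2.le
      have hc21 : 0 ≤ c * (s₂ - s₁) := mul_nonneg hc0.le (by linarith)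
      set π₀ : Measure (((Set.Icc (0:ℝ) 1 × X) × (Set.Icc (0:ℝ) 1 × X))) :=
        ENNReal.ofReal (1 - c) • η.map Δ
          + ENNReal.ofReal (c * (1 - s₂)) • Measure.dirac (yt, yt)
          + ENNReal.ofReal (c * s₁) • Measure.dirac (yt', yt')
          + ENNReal.ofReal (c * (s₂ - s₁)) • Measure.dirac (yt, yt') with hπ₀
      have hπp : IsProbabilityMeasure π₀ := by
        constructor
        rw [hπ₀]
        simp only [Measure.add_apply, Measure.smul_apply, measure_univ, smul_eq_mul, mul_one]
        rw [← ENNReal.ofReal_add (by linarith) hc1s2,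
          ← ENNReal.ofReal_add (by linarith) hcs1,
          ← ENNReal.ofReal_add (by linarith) hc21]
        rw [ENNReal.ofReal_eq_one]
        ring
      have hπc : IsCoupling π₀ (γ s₁) (γ s₂) := by
        constructor
        · rw [hπ₀, Measure.map_add _ _ measurable_fst, Measure.map_add _ _ measurable_fst,
            Measure.map_add _ _ measurable_fst,
            Measure.map_smul, Measure.map_smul, Measure.map_smul, Measure.map_smul,
            Measure.map_dirac' measurable_fst, Measure.map_dirac' measurable_fst,
            Measure.map_dirac' measurable_fst, marg_diag_fst, hγ1]
          have hre : ENNReal.ofReal (1 - c) • η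
              + ENNReal.ofReal (c * (1 - s₂)) • Measure.dirac yt
              + ENNReal.ofReal (c * s₁) • Measure.dirac yt'
              + ENNReal.ofReal (c * (s₂ - s₁)) • Measure.dirac yt
              = ENNReal.ofReal (1 - c) • η
                + (ENNReal.ofReal (c * (1 - s₂)) + ENNReal.ofReal (c * (s₂ - s₁)))
                    • Measure.dirac yt
                + ENNReal.ofReal (c * s₁) • Measure.dirac yt' := by
            rw [add_smul]; abel
          rw [hre, ← ENNReal.ofReal_add hc1s2 hc21]
          have : c * (1 - s₂) + c * (s₂ - s₁) = c * (1 - s₁) := by ring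
          rw [this]
        · rw [hπ₀, Measure.map_add _ _ measurable_snd, Measure.map_add _ _ measurable_snd,
            Measure.map_add _ _ measurable_snd,
            Measure.map_smul, Measure.map_smul, Measure.map_smul, Measure.map_smul,
            Measure.map_dirac' measurable_snd, Measure.map_dirac' measurable_snd,
            Measure.map_dirac' measurable_snd, marg_diag_snd, hγ2]
          have hre : ENNReal.ofReal (1 - c) • η
              + ENNReal.ofReal (c * (1 - s₂)) • Measure.dirac yt
              + ENNReal.ofReal (c * s₁) • Measure.dirac yt'
              + ENNReal.ofReal (c * (s₂ - s₁)) • Measure.dirac yt'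
              = ENNReal.ofReal (1 - c) • η
                + ENNReal.ofReal (c * (1 - s₂)) • Measure.dirac yt
                + (ENNReal.ofReal (c * s₁) + ENNReal.ofReal (c * (s₂ - s₁)))
                    • Measure.dirac yt' := by
            rw [add_smul]; abel
          rw [hre, ← ENNReal.ofReal_add hcs1 hc21]
          have : c * s₁ + c * (s₂ - s₁) = c * s₂ := by ring
          rw [this]
      apply wDist_eq_of d _ _ (v * (s₂ - s₁)) hK π₀ hπp hπc
      · rw [wCost_one, hπ₀, lintegral_add_measure, lintegral_add_measure, lintegral_add_measure,
          lintegral_smul_measure, lintegral_smul_measure, lintegral_smul_measure,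
          lintegral_smul_measure, lintegral_dirac' _ Fm, lintegral_dirac' _ Fm,
          lintegral_dirac' _ Fm, cost_diag]
        simp only [smul_eq_mul, hdself yt, hdself yt', ENNReal.ofReal_zero, mul_zero, zero_add, add_zero]
        rw [← hDdef, ← ENNReal.ofReal_mul hc21]
        apply le_of_eq
        congr 1
        rw [hvD]
        ring
      · intro π hπp' hπc'
        have h := lintegral_le_wCost_add' d (fun z => d z yt') f'm hlip_g' π _ _ hπc'.1 hπc'.2
        set H : ℝ≥0∞ := ∫⁻ z, ENNReal.ofReal (d z yt') ∂η with hHdef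
        have hHfin : H ≠ ⊤ := by
          have hle : H ≤ G + ENNReal.ofReal D := by
            have hpt : ∀ z, ENNReal.ofReal (d z yt')
                ≤ ENNReal.ofReal (d yt z) + ENNReal.ofReal D := by
              intro z
              have hzz : d z yt' ≤ d yt z + D := by
                calc d z yt' ≤ d z yt + d yt yt' := hdtri z yt yt'
                _ = d yt z + D := by rw [hdsymm z yt, hDdef]
              calc ENNReal.ofReal (d z yt') ≤ ENNReal.ofReal (d yt z + D) :=
                    ENNReal.ofReal_le_ofReal hzz
              _ ≤ ENNReal.ofReal (d yt z) + ENNReal.ofReal D := ENNReal.ofReal_add_le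
            calc H ≤ ∫⁻ z, (ENNReal.ofReal (d yt z) + ENNReal.ofReal D) ∂η :=
                  lintegral_mono hpt
            _ = G + ∫⁻ _z, ENNReal.ofReal D ∂η := by
                  rw [hGdef]; exact lintegral_add_right _ measurable_const
            _ = G + ENNReal.ofReal D := by rw [lintegral_const, measure_univ, mul_one]
          exact ne_top_of_le_ne_top
            (ENNReal.add_ne_top.mpr ⟨hGfin, ENNReal.ofReal_ne_top⟩) hle
        have hIR : ∀ s, 0 < s → s ≤ 1 →
            (∫⁻ z, ENNReal.ofReal (d z yt') ∂(γ s))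
              = ENNReal.ofReal (1 - c) * H + ENNReal.ofReal (c * (1 - s) * D) := by
          intro s hs0 hs1
          rw [hγR s hs0, lintegral_add_measure, lintegral_add_measure,
            lintegral_smul_measure, lintegral_smul_measure, lintegral_smul_measure,
            lintegral_dirac' _ g'm, lintegral_dirac' _ g'm]
          rw [hdself yt']
          simp only [smul_eq_mul, ENNReal.ofReal_zero, mul_zero, add_zero]
          rw [← hHdef, ← hDdef, ← ENNReal.ofReal_mul (mul_nonneg hc0.le (by linarith))]
        rw [hIR s₁ h1 (le_trans hs₁₂ hs₂u), hIR s₂ h2 hs₂u] at h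
        have hKr : v * (s₂ - s₁) + c * (1 - s₂) * D = c * (1 - s₁) * D := by
          rw [hvD]; ring
        have hIfin : ENNReal.ofReal (1 - c) * H + ENNReal.ofReal (c * (1 - s₂) * D) ≠ ⊤ :=
          ENNReal.add_ne_top.mpr
            ⟨ENNReal.mul_ne_top ENNReal.ofReal_ne_top hHfin, ENNReal.ofReal_ne_top⟩
        have h' : ENNReal.ofReal (v * (s₂ - s₁))
            + (ENNReal.ofReal (1 - c) * H + ENNReal.ofReal (c * (1 - s₂) * D))
            ≤ wCost d 1 π
              + (ENNReal.ofReal (1 - c) * H + ENNReal.ofReal (c * (1 - s₂) * D)) := by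
          calc ENNReal.ofReal (v * (s₂ - s₁))
              + (ENNReal.ofReal (1 - c) * H + ENNReal.ofReal (c * (1 - s₂) * D))
              = ENNReal.ofReal (1 - c) * H
                + (ENNReal.ofReal (v * (s₂ - s₁)) + ENNReal.ofReal (c * (1 - s₂) * D)) := by
                ring
            _ = ENNReal.ofReal (1 - c) * H + ENNReal.ofReal (c * (1 - s₁) * D) := by
                rw [← ENNReal.ofReal_add hK (by positivity), hKr]
            _ ≤ wCost d 1 π
                + (ENNReal.ofReal (1 - c) * H + ENNReal.ofReal (c * (1 - s₂) * D)) := h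
        exact (ENNReal.add_le_add_iff_right hIfin).mp h'
end
end
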